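/- arXiv:1802.09637 — 12 statements merged into one kernel-verified Lean document; each statement's English description precedes it below -/
import Mathlib

section
/- Let ‖·‖ denote the Euclidean norm on ℝ^d and let |·| be any other norm on ℝ^d. Then there exists λ ∈ [0,1) (depending only on the equivalence constants between the two norms) such that every curve γ : I → ℝ^d that is self-expanded with respect to |·| is a λ-curve with respect to ‖·‖. -/
open scoped RealInnerProductSpace
open Set

/-!
Compare the seminorm `N` with the Euclidean norm: `m‖x‖ ≤ N x ≤ M‖x‖`. For three points of a
self-expanded curve put `a = γ t₁ - γ t₃` and `c = γ t₃ - γ t₂`, so that `N (a + c) ≤ N a`.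
Splitting `c` into its components along `a` and orthogonal to `a` shows that the angle between
`a` and `c` is bounded away from `0`, i.e. `⟪a, c⟫ ≤ s ‖a‖ ‖c‖` with `s = M / √(m² + M²) < 1`,
while the triangle inequality for `N` gives `‖c‖ ≤ (2M/m) ‖a‖`. The law of cosines then yields
`‖a + c‖ ≤ ‖a‖ + λ ‖c‖` with `λ = (K + s) / (K + 1) < 1`, `K = 2M/m`.
-/

section InnerProductSpace

variable {E : Type*} [NormedAddCommGroup E] [InnerProductSpace ℝ E]

lemma norm_sq_smul_sub_inner_smul (a c : E) :
    ‖‖a‖ ^ 2 • c - ⟪a, c⟫ • a‖ ^ 2 = ‖a‖ ^ 2 * (‖a‖ ^ 2 * ‖c‖ ^ 2 - ⟪a, c⟫ ^ 2) := by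
  rw [norm_sub_sq_real, real_inner_smul_left, real_inner_smul_right, real_inner_comm,
    norm_smul, norm_smul]
  simp only [Real.norm_eq_abs, abs_pow, abs_norm, mul_pow, sq_abs]
  ring

lemma norm_add_le_of_inner_le {a c : E} {s K : ℝ} (hs₀ : 0 ≤ s) (hs₁ : s ≤ 1) (hK : 0 ≤ K)
    (hinner : ⟪a, c⟫ ≤ s * (‖a‖ * ‖c‖)) (hc : ‖c‖ ≤ K * ‖a‖) :
    ‖a + c‖ ≤ ‖a‖ + (K + s) / (K + 1) * ‖c‖ := by
  set lam := (K + s) / (K + 1)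
  have hlam : lam * (K + 1) = K + s := div_mul_cancel₀ _ (by positivity)
  have hlam₁ : lam ≤ 1 := (div_le_one (by positivity)).mpr (by linarith)
  have hlam₀ : 0 ≤ lam := by positivity
  clear_value lam
  have key : (1 - lam ^ 2) * ‖c‖ ^ 2 ≤ 2 * (lam - s) * (‖a‖ * ‖c‖) :=
    calc (1 - lam ^ 2) * ‖c‖ ^ 2 ≤ 2 * (1 - lam) * (‖c‖ * ‖c‖) := by
          nlinarith [sq_nonneg ((1 - lam) * ‖c‖)]
      _ ≤ 2 * (1 - lam) * (K * ‖a‖ * ‖c‖) := by gcongr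
      _ = 2 * (lam - s) * (‖a‖ * ‖c‖) := by linear_combination (-2 * ‖a‖ * ‖c‖) * hlam
  rw [← pow_le_pow_iff_left₀ (norm_nonneg _) (by positivity) two_ne_zero, norm_add_sq_real]
  linarith

end InnerProductSpace

namespace Seminorm

section InnerProductSpace

variable {E : Type*} [NormedAddCommGroup E] [InnerProductSpace ℝ E] (N : Seminorm ℝ E)

/-- Write `‖a‖² (a + c) = (‖a‖² + ⟪a, c⟫) a + r`, where `r = ‖a‖² c - ⟪a, c⟫ a` is
orthogonal to `a`. -/
lemma inner_mul_le_map_smul_sub_inner_smul {a c : E} (hac : N (a + c) ≤ N a)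
    (hp : 0 ≤ ⟪a, c⟫) : ⟪a, c⟫ * N a ≤ N (‖a‖ ^ 2 • c - ⟪a, c⟫ • a) := by
  have hsplit : (‖a‖ ^ 2 + ⟪a, c⟫) • a = ‖a‖ ^ 2 • (a + c) - (‖a‖ ^ 2 • c - ⟪a, c⟫ • a) := by
    module
  have h := map_sub_le_add N (‖a‖ ^ 2 • (a + c)) (‖a‖ ^ 2 • c - ⟪a, c⟫ • a)
  rw [← hsplit, map_smul_eq_mul, map_smul_eq_mul, Real.norm_of_nonneg (by positivity),
    Real.norm_of_nonneg (by positivity)] at h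
  nlinarith [mul_le_mul_of_nonneg_left hac (sq_nonneg ‖a‖)]

variable {m M : ℝ}

lemma inner_le_of_map_add_le (hlow : ∀ x, m * ‖x‖ ≤ N x) (hup : ∀ x, N x ≤ M * ‖x‖)
    (hm : 0 < m) (hM : 0 ≤ M) {a c : E} (hac : N (a + c) ≤ N a) :
    ⟪a, c⟫ ≤ M / √(m ^ 2 + M ^ 2) * (‖a‖ * ‖c‖) := by
  have hS : 0 < √(m ^ 2 + M ^ 2) := by positivity
  rcases le_or_gt ⟪a, c⟫ 0 with hp | hp
  · exact hp.trans (by positivity)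
  have ha : 0 < ‖a‖ := norm_pos_iff.mpr fun h ↦ by simp [h] at hp
  have hbound : ⟪a, c⟫ * (m * ‖a‖) ≤ M * ‖‖a‖ ^ 2 • c - ⟪a, c⟫ • a‖ :=
    calc ⟪a, c⟫ * (m * ‖a‖) ≤ ⟪a, c⟫ * N a := by gcongr; exact hlow a
      _ ≤ N (‖a‖ ^ 2 • c - ⟪a, c⟫ • a) := N.inner_mul_le_map_smul_sub_inner_smul hac hp.le
      _ ≤ _ := hup _
  have hsq : (⟪a, c⟫ * √(m ^ 2 + M ^ 2)) ^ 2 ≤ (M * (‖a‖ * ‖c‖)) ^ 2 := by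
    have := pow_le_pow_left₀ (by positivity) hbound 2
    rw [mul_pow M, norm_sq_smul_sub_inner_smul] at this
    rw [mul_pow, Real.sq_sqrt (by positivity)]
    nlinarith [pow_pos ha 2]
  rw [div_mul_eq_mul_div, le_div_iff₀ hS]
  exact (pow_le_pow_iff_left₀ (by positivity) (by positivity) two_ne_zero).mp hsq

lemma norm_le_of_map_add_le (hlow : ∀ x, m * ‖x‖ ≤ N x) (hup : ∀ x, N x ≤ M * ‖x‖)
    (hm : 0 < m) {a c : E} (hac : N (a + c) ≤ N a) : ‖c‖ ≤ 2 * M / m * ‖a‖ := by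
  have hc : N c ≤ N (a + c) + N a := by simpa using map_sub_le_add N (a + c) a
  rw [div_mul_eq_mul_div, le_div_iff₀ hm]
  nlinarith [hlow c, hup a]

lemma exists_norm_add_le_of_map_add_le (hlow : ∀ x, m * ‖x‖ ≤ N x)
    (hup : ∀ x, N x ≤ M * ‖x‖) (hm : 0 < m) (hM : 0 ≤ M) :
    ∃ lam : ℝ, 0 ≤ lam ∧ lam < 1 ∧
      ∀ a c : E, N (a + c) ≤ N a → ‖a + c‖ ≤ ‖a‖ + lam * ‖c‖ := by
  set s := M / √(m ^ 2 + M ^ 2)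
  set K := 2 * M / m
  have hs₁ : s < 1 := by
    rw [div_lt_one (by positivity), Real.lt_sqrt hM]
    nlinarith
  refine ⟨(K + s) / (K + 1), by positivity, (div_lt_one (by positivity)).mpr (by linarith),
    fun a c hac ↦ norm_add_le_of_inner_le (by positivity) hs₁.le (by positivity)
      (N.inner_le_of_map_add_le hlow hup hm hM hac) (N.norm_le_of_map_add_le hlow hup hm hac)⟩

end InnerProductSpace

variable {E : Type*} [NormedAddCommGroup E] [NormedSpace ℝ E] [FiniteDimensional ℝ E]
  (N : Seminorm ℝ E)

lemma continuous_of_finiteDimensional : Continuous N :=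
  continuousOn_univ.mp (N.convexOn.continuousOn isOpen_univ)

lemma exists_pos_mul_norm_le (hN : ∀ x, N x = 0 → x = 0) :
    ∃ m, 0 < m ∧ ∀ x, m * ‖x‖ ≤ N x := by
  cases subsingleton_or_nontrivial E
  · exact ⟨1, one_pos, fun x ↦ by simp [Subsingleton.elim x 0]⟩
  obtain ⟨z, hz, hmin⟩ := (isCompact_sphere (0 : E) 1).exists_isMinOn
    (NormedSpace.sphere_nonempty.mpr zero_le_one) N.continuous_of_finiteDimensional.continuousOn
  have hz₁ : ‖z‖ = 1 := by simpa using hz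
  have hNz : 0 < N z := (apply_nonneg N z).lt_of_ne' fun h ↦ by simp [hN z h] at hz₁
  refine ⟨N z, hNz, fun x ↦ ?_⟩
  rcases eq_or_ne x 0 with rfl | hx
  · simp
  have hx' : 0 < ‖x‖ := norm_pos_iff.mpr hx
  have hunit : ‖x‖⁻¹ • x ∈ Metric.sphere (0 : E) 1 := by simp [norm_smul, hx'.ne']
  have := isMinOn_iff.mp hmin _ hunit
  rw [map_smul_eq_mul, norm_inv, norm_norm] at this
  rwa [mul_comm, ← le_inv_mul_iff₀ hx']

lemma exists_map_le_mul_norm : ∃ M, 0 < M ∧ ∀ x, N x ≤ M * ‖x‖ :=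
  N.bound_of_continuous_normedSpace N.continuous_of_finiteDimensional

end Seminorm

/-- If `‖·‖` is the Euclidean norm on `ℝ^d` and `N` is any other norm on
`ℝ^d`, then there exists `λ ∈ [0,1)` such that every curve that is self-expanded with
respect to `N` is a `λ`-curve with respect to `‖·‖`. -/
theorem selfExpanded_is_lambda_curve (d : ℕ)
    (N : Seminorm ℝ (EuclideanSpace ℝ (Fin d)))
    (hN : ∀ x, N x = 0 → x = 0) :
    ∃ lam : ℝ, 0 ≤ lam ∧ lam < 1 ∧
      ∀ (I : Set ℝ), I.OrdConnected →
        ∀ γ : ℝ → EuclideanSpace ℝ (Fin d),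
          (∀ t₁ ∈ I, ∀ t₂ ∈ I, ∀ t₃ ∈ I, t₁ ≤ t₂ → t₂ ≤ t₃ →
            N (γ t₁ - γ t₂) ≤ N (γ t₁ - γ t₃)) →
          ∀ t₁ ∈ I, ∀ t₂ ∈ I, ∀ t₃ ∈ I, t₁ ≤ t₂ → t₂ ≤ t₃ →
            ‖γ t₁ - γ t₂‖ ≤ ‖γ t₁ - γ t₃‖ + lam * ‖γ t₂ - γ t₃‖ := by
  obtain ⟨m, hm, hlow⟩ := N.exists_pos_mul_norm_le hN
  obtain ⟨M, hM, hup⟩ := N.exists_map_le_mul_norm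
  obtain ⟨lam, hlam₀, hlam₁, hlam⟩ := N.exists_norm_add_le_of_map_add_le hlow hup hm hM.le
  refine ⟨lam, hlam₀, hlam₁, fun I _ γ hexp t₁ h₁ t₂ h₂ t₃ h₃ h₁₂ h₂₃ ↦ ?_⟩
  have h := hlam (γ t₁ - γ t₃) (γ t₃ - γ t₂)
  rw [sub_add_sub_cancel, norm_sub_rev (γ t₃)] at h
  exact h (hexp t₁ h₁ t₂ h₂ t₃ h₃ h₁₂ h₂₃)
end

section
/- Let ‖·‖ be the Euclidean norm on ℝ^d and let δ ∈ (0,1]. For y ∈ ℝ^d set C_y = {y + t(y − z) : z ∈ ℝ^d, ‖z‖ < δ, t > 0}. Then there exists λ ∈ (0,1), depending only on δ, such that for all x, y ∈ ℝ^d with 1 ≤ ‖y‖ ≤ 1/δ, ‖x‖ ≤ 1/δ and x ∉ C_y, one has ‖x‖ − ‖y‖ ≤ λ‖x − y‖. -/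
/-!
Write `q = ‖y‖`, `r = ‖x - y‖` and `a = ⟪y, x - y⟫`, so that `‖x‖² = q² + 2a + r²`. That `x` lies
outside the cone says that the ray from `y` in direction `y - x` stays at distance `≥ δ` from `0`;
at the foot of the perpendicular from `0` this gives `a² ≤ (q² - δ²) r²`, and `q ≤ 1/δ` turns it
into `a ≤ κ q r` with `κ = √(1 - δ⁴) < 1`. Hence `‖x‖² ≤ q² + 2κqr + r²`, which is at most
`(q + λr)²` as soon as `(1 - λ) r ≤ (λ - κ) q`; since `r ≤ 2/δ` and `q ≥ 1`, this holds for
`λ = (2 + δκ)/(2 + δ)`, the solution of `2(1 - λ) = δ(λ - κ)`.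
-/

open scoped RealInnerProductSpace

theorem Real.sqrt_sq_sub_sq_le {q δ : ℝ} (hq : 0 ≤ q) (hδ : 0 ≤ δ) (hqδ : q * δ ≤ 1) :
    √(q ^ 2 - δ ^ 2) ≤ √(1 - δ ^ 4) * q := by
  have hqδ2 : (q * δ) ^ 2 ≤ 1 := pow_le_one₀ (by positivity) hqδ
  calc √(q ^ 2 - δ ^ 2) ≤ √((1 - δ ^ 4) * q ^ 2) :=
        Real.sqrt_le_sqrt (by nlinarith [mul_le_mul_of_nonneg_left hqδ2 (sq_nonneg δ)])
    _ = √(1 - δ ^ 4) * q := by rw [Real.sqrt_mul' _ (sq_nonneg _), Real.sqrt_sq hq]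

section InnerProductSpace

variable {E : Type*} [NormedAddCommGroup E] [InnerProductSpace ℝ E]

/-- The cone `C_y` of the paper. -/
def shadowCone (y : E) (δ : ℝ) : Set E :=
  {w | ∃ (z : E) (t : ℝ), ‖z‖ < δ ∧ 0 < t ∧ w = y + t • (y - z)}

theorem le_norm_sub_smul_of_notMem_shadowCone {x y : E} {δ : ℝ} (hx : x ∉ shadowCone y δ)
    {s : ℝ} (hs : 0 < s) : δ ≤ ‖y - s • (x - y)‖ := by
  refine le_of_not_gt fun hlt => hx ⟨y - s • (x - y), s⁻¹, hlt, inv_pos.2 hs, ?_⟩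
  rw [sub_sub_cancel, smul_smul, inv_mul_cancel₀ hs.ne', one_smul, add_sub_cancel]

theorem real_inner_le_sqrt_mul_norm_of_forall_le_norm_sub_smul {y v : E} {δ : ℝ} (hδ : 0 ≤ δ)
    (h : ∀ s : ℝ, 0 < s → δ ≤ ‖y - s • v‖) : ⟪y, v⟫ ≤ √(‖y‖ ^ 2 - δ ^ 2) * ‖v‖ := by
  set a := ⟪y, v⟫
  rcases le_or_gt a 0 with ha | ha
  · exact ha.trans (by positivity)
  have hv : 0 < ‖v‖ := norm_pos_iff.2 fun hv => ha.ne' (by simp [a, hv])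
  have hfoot : ‖y - (a / ‖v‖ ^ 2) • v‖ ^ 2 = ‖y‖ ^ 2 - a ^ 2 / ‖v‖ ^ 2 := by
    rw [norm_sub_sq_real, real_inner_smul_right, norm_smul, Real.norm_eq_abs, mul_pow, sq_abs]
    field_simp
    ring
  have hδa : δ ^ 2 ≤ ‖y‖ ^ 2 - a ^ 2 / ‖v‖ ^ 2 := by
    rw [← hfoot]
    exact pow_le_pow_left₀ hδ (h (a / ‖v‖ ^ 2) (div_pos ha (pow_pos hv 2))) 2
  have ha2 : a ^ 2 ≤ (‖y‖ ^ 2 - δ ^ 2) * ‖v‖ ^ 2 := by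
    rw [← div_le_iff₀ (by positivity)]
    linarith
  calc a ≤ √((‖y‖ ^ 2 - δ ^ 2) * ‖v‖ ^ 2) := Real.le_sqrt_of_sq_le ha2
    _ = √(‖y‖ ^ 2 - δ ^ 2) * ‖v‖ := by rw [Real.sqrt_mul' _ (by positivity), Real.sqrt_sq hv.le]

theorem norm_le_add_mul_norm_sub_of_real_inner_le {x y : E} {κ lam : ℝ} (hlam0 : 0 ≤ lam)
    (hlam1 : lam ≤ 1) (hinner : ⟪y, x - y⟫ ≤ κ * ‖y‖ * ‖x - y‖)
    (h : (1 - lam) * ‖x - y‖ ≤ (lam - κ) * ‖y‖) : ‖x‖ ≤ ‖y‖ + lam * ‖x - y‖ := by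
  have hx : ‖x‖ ^ 2 = ‖y‖ ^ 2 + 2 * ⟪y, x - y⟫ + ‖x - y‖ ^ 2 := by
    rw [← norm_add_sq_real, add_sub_cancel]
  have hsq : (1 - lam ^ 2) * ‖x - y‖ ≤ 2 * (1 - lam) * ‖x - y‖ := by
    gcongr
    nlinarith
  refine (pow_le_pow_iff_left₀ (norm_nonneg x) (by positivity) two_ne_zero).1 ?_
  nlinarith [norm_nonneg (x - y)]

end InnerProductSpace

theorem norm_diff_le_of_not_mem_cone_general (d : ℕ) (δ : ℝ) (hδ0 : 0 < δ) :
    ∃ lam : ℝ, 0 < lam ∧ lam < 1 ∧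
      ∀ x y : EuclideanSpace ℝ (Fin d),
        1 ≤ ‖y‖ → ‖y‖ ≤ 1 / δ → ‖x‖ ≤ 1 / δ →
        x ∉ {w : EuclideanSpace ℝ (Fin d) |
              ∃ (z : EuclideanSpace ℝ (Fin d)) (t : ℝ),
                ‖z‖ < δ ∧ 0 < t ∧ w = y + t • (y - z)} →
        ‖x‖ - ‖y‖ ≤ lam * ‖x - y‖ := by
  set κ := √(1 - δ ^ 4)
  have hκ1 : κ < 1 := (Real.sqrt_lt' one_pos).2 (by linarith [pow_pos hδ0 4])
  set lam := (2 + δ * κ) / (2 + δ)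
  have hlam : 2 * (1 - lam) = δ * (lam - κ) := by simp only [lam]; field_simp; ring
  have hlam1 : lam < 1 :=
    (div_lt_one (by positivity)).2 (by linarith [mul_lt_of_lt_one_right hδ0 hκ1])
  have hlamκ : 0 ≤ lam - κ := (mul_nonneg_iff_of_pos_left hδ0).1 (by linarith)
  refine ⟨lam, by positivity, hlam1, fun x y hy1 hy2 hx2 hx => ?_⟩
  have hinner : ⟪y, x - y⟫ ≤ κ * ‖y‖ * ‖x - y‖ :=
    (real_inner_le_sqrt_mul_norm_of_forall_le_norm_sub_smul hδ0.le
      fun _ hs => le_norm_sub_smul_of_notMem_shadowCone hx hs).trans <| by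
        gcongr
        exact Real.sqrt_sq_sub_sq_le (norm_nonneg y) hδ0.le ((le_div_iff₀ hδ0).1 hy2)
  have hr : δ * ‖x - y‖ ≤ 2 := by
    rw [le_div_iff₀ hδ0] at hx2 hy2
    nlinarith [norm_sub_le x y]
  have hcond : (1 - lam) * ‖x - y‖ ≤ (lam - κ) * ‖y‖ :=
    calc (1 - lam) * ‖x - y‖ = (lam - κ) * (δ * ‖x - y‖ / 2) := by
          linear_combination ‖x - y‖ / 2 * hlam
      _ ≤ (lam - κ) * ‖y‖ := by gcongr; linarith
  linarith [norm_le_add_mul_norm_sub_of_real_inner_le (by positivity) hlam1.le hinner hcond]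

/-- For `δ ∈ (0,1]` and `C_y = {y + t(y − z) : ‖z‖ < δ, t > 0}`, there is
`λ ∈ (0,1)` depending only on `δ` such that whenever `1 ≤ ‖y‖ ≤ 1/δ`, `‖x‖ ≤ 1/δ` and
`x ∉ C_y`, one has `‖x‖ − ‖y‖ ≤ λ‖x − y‖`. -/
theorem norm_diff_le_of_not_mem_cone (d : ℕ) (δ : ℝ) (hδ0 : 0 < δ) (hδ1 : δ ≤ 1) :
    ∃ lam : ℝ, 0 < lam ∧ lam < 1 ∧
      ∀ x y : EuclideanSpace ℝ (Fin d),
        1 ≤ ‖y‖ → ‖y‖ ≤ 1 / δ → ‖x‖ ≤ 1 / δ →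
        x ∉ {w : EuclideanSpace ℝ (Fin d) |
              ∃ (z : EuclideanSpace ℝ (Fin d)) (t : ℝ),
                ‖z‖ < δ ∧ 0 < t ∧ w = y + t • (y - z)} →
        ‖x‖ - ‖y‖ ≤ lam * ‖x - y‖ :=
  norm_diff_le_of_not_mem_cone_general d δ hδ0
end

section
/- Let λ ∈ (−1,1) and let γ : I → ℝ^d be a λ-curve. Then γ is λ-uniformly non-collinear: for all u < s < t in I such that γ(u) ≠ γ(t) and γ(s) ≠ γ(t), one has ⟨(γ(u) − γ(t))/‖γ(u) − γ(t)‖ , (γ(s) − γ(t))/‖γ(s) − γ(t)‖⟩ > −λ. -/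
open scoped RealInnerProductSpace
open Set

/-- A `λ`-curve (with `λ ∈ (-1,1)`) is `λ`-uniformly non-collinear. -/
theorem lambda_curve_uniformly_noncollinear (d : ℕ) (lam : ℝ)
    (hlam₁ : -1 < lam) (hlam₂ : lam < 1)
    (I : Set ℝ) (hI : I.OrdConnected)
    (γ : ℝ → EuclideanSpace ℝ (Fin d))
    (hγ : ∀ t₁ ∈ I, ∀ t₂ ∈ I, ∀ t₃ ∈ I, t₁ ≤ t₂ → t₂ ≤ t₃ →
      ‖γ t₁ - γ t₂‖ ≤ ‖γ t₁ - γ t₃‖ + lam * ‖γ t₂ - γ t₃‖)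
    (u s t : ℝ) (hu : u ∈ I) (hs : s ∈ I) (ht : t ∈ I)
    (hus : u < s) (hst : s < t)
    (hut : γ u ≠ γ t) (hstne : γ s ≠ γ t) :
    ⟪(‖γ u - γ t‖)⁻¹ • (γ u - γ t), (‖γ s - γ t‖)⁻¹ • (γ s - γ t)⟫ > -lam := by
  have key := hγ u hu s hs t ht hus.le hst.le
  set a := γ u - γ t with ha'
  set b := γ s - γ t with hb'
  have hab : γ u - γ s = a - b := by rw [ha', hb']; abel
  rw [hab] at key
  have ha : 0 < ‖a‖ := norm_pos_iff.mpr (sub_ne_zero.mpr hut)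
  have hb : 0 < ‖b‖ := norm_pos_iff.mpr (sub_ne_zero.mpr hstne)
  have hsq : ‖a - b‖ ^ 2 ≤ (‖a‖ + lam * ‖b‖) ^ 2 := by
    have h0 : 0 ≤ ‖a - b‖ := norm_nonneg _
    nlinarith
  have hexp : ‖a - b‖ ^ 2 = ‖a‖ ^ 2 - 2 * ⟪a, b⟫ + ‖b‖ ^ 2 := norm_sub_sq_real a b
  have hib : ⟪a, b⟫ > -lam * (‖a‖ * ‖b‖) := by
    nlinarith [mul_pos (show (0:ℝ) < 1 - lam ^ 2 by nlinarith) (mul_pos hb hb),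
      mul_pos ha hb]
  rw [real_inner_smul_left, real_inner_smul_right, gt_iff_lt]
  have hia : 0 < ‖a‖⁻¹ := inv_pos.mpr ha
  have hibp : 0 < ‖b‖⁻¹ := inv_pos.mpr hb
  calc -lam = ‖a‖⁻¹ * (‖b‖⁻¹ * (-lam * (‖a‖ * ‖b‖))) := by field_simp
    _ < ‖a‖⁻¹ * (‖b‖⁻¹ * ⟪a, b⟫) :=
        mul_lt_mul_of_pos_left (mul_lt_mul_of_pos_left hib hibp) hia
end

section
/- Let λ ∈ [−1,1) and let γ : I → ℝ^d be a continuous λ-curve. Then γ satisfies the λ-cone property: for every t ∈ I, every q ∈ sec⁺(t), and every u ∈ I with u < t and γ(u) ≠ γ(t), one has ⟨q, γ(u) − γ(t)⟩ ≤ λ‖γ(u) − γ(t)‖. -/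
open scoped RealInnerProductSpace
open Set Filter

/-- The set of (limits of) forward secants of the curve `γ : I → ℝ^d` at `t`. -/
def secPlus {d : ℕ} (γ : ℝ → EuclideanSpace ℝ (Fin d)) (I : Set ℝ) (t : ℝ) :
    Set (EuclideanSpace ℝ (Fin d)) :=
  {q | ‖q‖ = 1 ∧ ∃ u : ℕ → ℝ,
    (∀ k, u k ∈ I ∧ t < u k ∧ γ (u k) ≠ γ t) ∧
    Tendsto u atTop (nhds t) ∧
    Tendsto (fun k => (‖γ (u k) - γ t‖)⁻¹ • (γ (u k) - γ t)) atTop (nhds q)}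

/-- Every continuous `λ`-curve satisfies the `λ`-cone property. -/
theorem lambda_curve_has_lambda_cone_property (d : ℕ) (lam : ℝ)
    (hlam₁ : -1 ≤ lam) (hlam₂ : lam < 1)
    (I : Set ℝ) (hI : I.OrdConnected)
    (γ : ℝ → EuclideanSpace ℝ (Fin d))
    (hcont : ContinuousOn γ I)
    (hγ : ∀ t₁ ∈ I, ∀ t₂ ∈ I, ∀ t₃ ∈ I, t₁ ≤ t₂ → t₂ ≤ t₃ →
      ‖γ t₁ - γ t₂‖ ≤ ‖γ t₁ - γ t₃‖ + lam * ‖γ t₂ - γ t₃‖)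
    (t : ℝ) (ht : t ∈ I) (q : EuclideanSpace ℝ (Fin d)) (hq : q ∈ secPlus γ I t)
    (u : ℝ) (hu : u ∈ I) (hut : u < t) (hne : γ u ≠ γ t) :
    ⟪q, γ u - γ t⟫ ≤ lam * ‖γ u - γ t‖ := by
  obtain ⟨-, v, hv, hvt, hvq⟩ := hq
  have ha : (0:ℝ) < ‖γ u - γ t‖ := by
    exact norm_sub_pos_iff.mpr hne
  have hγv : Tendsto (fun k => γ (v k)) atTop (nhds (γ t)) := by
    apply (hcont t ht).tendsto.comp
    rw [tendsto_nhdsWithin_iff]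
    exact ⟨hvt, Eventually.of_forall fun k => (hv k).1⟩
  have hr : Tendsto (fun k => ‖γ (v k) - γ t‖) atTop (nhds 0) := by
    have := (hγv.sub_const (γ t)).norm
    simpa using this
  have hsmall : ∀ᶠ k in atTop, ‖γ (v k) - γ t‖ < ‖γ u - γ t‖ :=
    hr.eventually (eventually_lt_nhds ha)
  have key : ∀ᶠ k in atTop,
      ⟪(‖γ (v k) - γ t‖)⁻¹ • (γ (v k) - γ t), γ u - γ t⟫ ≤
        lam * ‖γ u - γ t‖ + (1 - lam ^ 2) * ‖γ (v k) - γ t‖ / 2 := by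
    filter_upwards [hsmall] with k hk
    have hwne : γ (v k) - γ t ≠ 0 := sub_ne_zero.mpr (hv k).2.2
    have hrpos : (0:ℝ) < ‖γ (v k) - γ t‖ := norm_pos_iff.mpr hwne
    have hcurve := hγ u hu t ht (v k) (hv k).1 hut.le (hv k).2.1.le
    have haw : γ u - γ (v k) = (γ u - γ t) - (γ (v k) - γ t) := by abel
    have h1 : ‖γ u - γ t‖ - lam * ‖γ (v k) - γ t‖ ≤ ‖(γ u - γ t) - (γ (v k) - γ t)‖ := by
      rw [← haw]
      rw [norm_sub_rev (γ t)] at hcurve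
      linarith [hcurve]
    have h0 : 0 ≤ ‖γ u - γ t‖ - lam * ‖γ (v k) - γ t‖ := by nlinarith [hrpos.le, hk]
    have h2 := mul_self_le_mul_self h0 h1
    have h3 : ‖(γ u - γ t) - (γ (v k) - γ t)‖ ^ 2 =
        ‖γ u - γ t‖ ^ 2 - 2 * ⟪γ u - γ t, γ (v k) - γ t⟫ + ‖γ (v k) - γ t‖ ^ 2 :=
      norm_sub_sq_real _ _
    have h4 : ⟪γ u - γ t, γ (v k) - γ t⟫ ≤
        lam * ‖γ u - γ t‖ * ‖γ (v k) - γ t‖ + (1 - lam ^ 2) * ‖γ (v k) - γ t‖ ^ 2 / 2 := by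
      nlinarith [h2, h3]
    rw [real_inner_smul_left, real_inner_comm, inv_mul_le_iff₀ hrpos]
    nlinarith [h4]
  have hL : Tendsto (fun k => ⟪(‖γ (v k) - γ t‖)⁻¹ • (γ (v k) - γ t), γ u - γ t⟫) atTop
      (nhds ⟪q, γ u - γ t⟫) := hvq.inner tendsto_const_nhds
  have hR : Tendsto (fun k => lam * ‖γ u - γ t‖ + (1 - lam ^ 2) * ‖γ (v k) - γ t‖ / 2) atTop
      (nhds (lam * ‖γ u - γ t‖)) := by
    simpa using tendsto_const_nhds.add ((hr.const_mul (1 - lam ^ 2)).div_const 2)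
  exact le_of_tendsto_of_tendsto hL hR key
end

section
/- Let d ≥ 1, let λ < 1/d, and let Σ be a subset of the unit sphere S^{d−1} of ℝ^d such that ⟨x, x'⟩ ≥ −λ for all x, x' ∈ Σ. Then 0 does not belong to the convex hull of Σ (hence Σ is contained in an open half-space and generates a pointed closed convex cone). -/
open scoped RealInnerProductSpace
open Set

/-- If `Σ` is a subset of the unit sphere of `ℝ^d` (`d ≥ 1`) such that
`⟪x, x'⟫ ≥ −λ` for all `x, x' ∈ Σ`, with `λ < 1/d`, then `0 ∉ conv(Σ)`. -/
theorem zero_not_mem_convexHull_of_inner_ge (d : ℕ) (hd : 1 ≤ d)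
    (lam : ℝ) (hlam : lam < 1 / (d : ℝ))
    (S : Set (EuclideanSpace ℝ (Fin d)))
    (hS : S ⊆ Metric.sphere (0 : EuclideanSpace ℝ (Fin d)) 1)
    (hinner : ∀ x ∈ S, ∀ x' ∈ S, ⟪x, x'⟫ ≥ -lam) :
    (0 : EuclideanSpace ℝ (Fin d)) ∉ convexHull ℝ S := by
  classical
  intro h0
  rw [convexHull_eq_union] at h0
  simp only [Set.mem_iUnion] at h0
  obtain ⟨t, htS, hai, hmem⟩ := h0
  -- cardinality bound from affine independence
  have hcard : t.card ≤ d + 1 := by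
    have h1 := hai.card_le_finrank_succ (k := ℝ)
    have h2 : Module.finrank ℝ ↥(vectorSpan ℝ (Set.range (Subtype.val : t → _)))
        ≤ Module.finrank ℝ (EuclideanSpace ℝ (Fin d)) := Submodule.finrank_le _
    rw [finrank_euclideanSpace_fin] at h2
    simp only [Fintype.card_coe] at h1
    omega
  obtain ⟨w, hw0, hw1, hwc⟩ := Finset.mem_convexHull'.mp hmem
  -- unit vectors
  have hunit : ∀ y ∈ t, ⟪y, y⟫ = 1 := by
    intro y hy
    have := hS (htS hy)
    simp only [Metric.mem_sphere, dist_zero_right] at this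
    rw [real_inner_self_eq_norm_sq, this]; norm_num
  have htne : t.Nonempty := by
    rcases Finset.eq_empty_or_nonempty t with rfl | h
    · simp at hw1
    · exact h
  have hlam1 : -1 ≤ lam := by
    obtain ⟨y, hy⟩ := htne
    have h1 := hinner y (htS hy) y (htS hy)
    rw [hunit y hy] at h1; linarith
  -- expand the norm of the zero combination
  have hexp : (0:ℝ) = ∑ y ∈ t, ∑ z ∈ t, w y * w z * ⟪y, z⟫ := by
    have : (0:ℝ) = ⟪∑ y ∈ t, w y • y, ∑ z ∈ t, w z • z⟫ := by
      rw [hwc]; simp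
    rw [this, sum_inner]
    refine Finset.sum_congr rfl fun y hy => ?_
    rw [inner_sum]
    refine Finset.sum_congr rfl fun z hz => ?_
    rw [real_inner_smul_left, real_inner_smul_right]; ring
  set Q : ℝ := ∑ y ∈ t, (w y)^2 with hQdef
  -- diagonal / off-diagonal split
  have hsplit : ∑ y ∈ t, ∑ z ∈ t, w y * w z * ⟪y, z⟫
      ≥ Q + (-lam) * (1 - Q) := by
    have key : ∀ y ∈ t, ∑ z ∈ t, w y * w z * ⟪y, z⟫
        ≥ (w y)^2 + (-lam) * (w y * (1 - w y)) := by
      intro y hy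
      have hsp : ∑ z ∈ t, w y * w z * ⟪y, z⟫
          = (w y)^2 * ⟪y, y⟫ + ∑ z ∈ t.erase y, w y * w z * ⟪y, z⟫ := by
        rw [← Finset.add_sum_erase t _ hy]; ring_nf
      rw [hsp, hunit y hy, mul_one]
      have hbound : ∑ z ∈ t.erase y, w y * w z * ⟪y, z⟫
          ≥ ∑ z ∈ t.erase y, w y * w z * (-lam) := by
        refine Finset.sum_le_sum fun z hz => ?_
        have hz' := Finset.mem_of_mem_erase hz
        exact mul_le_mul_of_nonneg_left
          (hinner y (htS hy) z (htS hz'))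
          (mul_nonneg (hw0 y hy) (hw0 z hz'))
      have hsum_erase : ∑ z ∈ t.erase y, w z = 1 - w y := by
        have := Finset.add_sum_erase t w hy
        rw [hw1] at this; linarith
      have heq : ∑ z ∈ t.erase y, w y * w z * (-lam) = (-lam) * (w y * (1 - w y)) := by
        have : ∑ z ∈ t.erase y, w y * w z * (-lam)
            = ((-lam) * w y) * ∑ z ∈ t.erase y, w z := by
          rw [Finset.mul_sum]
          exact Finset.sum_congr rfl fun z _ => by ring
        rw [this, hsum_erase]; ring
      linarith [hbound, heq ▸ hbound]
    calc ∑ y ∈ t, ∑ z ∈ t, w y * w z * ⟪y, z⟫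
        ≥ ∑ y ∈ t, ((w y)^2 + (-lam) * (w y * (1 - w y))) :=
          Finset.sum_le_sum key
      _ = Q + (-lam) * (1 - Q) := by
          rw [Finset.sum_add_distrib]
          have h1 : ∑ y ∈ t, (-lam) * (w y * (1 - w y))
              = (-lam) * (∑ y ∈ t, w y - ∑ y ∈ t, (w y)^2) := by
            rw [← Finset.mul_sum]
            congr 1
            rw [← Finset.sum_sub_distrib]
            exact Finset.sum_congr rfl fun y _ => by ring
          rw [h1, hw1]
  -- Cauchy–Schwarz lower bound on Q
  have hQcard : (1:ℝ) ≤ (t.card : ℝ) * Q := by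
    have := sq_sum_le_card_mul_sum_sq (s := t) (f := w)
    rw [hw1] at this
    simpa using this
  have hQ0 : 0 ≤ Q := Finset.sum_nonneg fun y _ => sq_nonneg _
  have hcardR : (t.card : ℝ) ≤ (d : ℝ) + 1 := by
    exact_mod_cast hcard
  have hd1 : (1:ℝ) ≤ (d:ℝ) := by exact_mod_cast hd
  have hlamd : lam * d < 1 := by
    rw [lt_div_iff₀ (by linarith : (0:ℝ) < d)] at hlam
    linarith
  -- combine
  have hQle : (1:ℝ) ≤ ((d:ℝ)+1) * Q :=
    le_trans hQcard (mul_le_mul_of_nonneg_right hcardR hQ0)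
  nlinarith [hexp ▸ hsplit, mul_nonneg hQ0 (by linarith : (0:ℝ) ≤ 1 + lam)]
end

section
/- Let d ≥ 1, λ ∈ [−1,1/d), and let γ : I → ℝ^d be a continuous λ-curve. Then there exists ρ > 0 (depending only on λ) such that for every t ∈ I and every q ∈ sec⁺(t) there exists a unit vector ξ ∈ ℝ^d satisfying ⟨ξ, u⟩ ≤ −ρ‖u‖ for all u ∈ K(t), and ⟨ξ, q⟩ ≥ ρ. -/
open scoped RealInnerProductSpace
open Set Filter

/-- The smallest closed convex cone of `ℝ^d` containing `{γ(s) − γ(t) : s ∈ I, s ≤ t}`. -/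
def coneK {d : ℕ} (γ : ℝ → EuclideanSpace ℝ (Fin d)) (I : Set ℝ) (t : ℝ) :
    Set (EuclideanSpace ℝ (Fin d)) :=
  ⋂₀ {C : Set (EuclideanSpace ℝ (Fin d)) |
      IsClosed C ∧ Convex ℝ C ∧ (∀ x ∈ C, ∀ r : ℝ, 0 ≤ r → r • x ∈ C) ∧
      {v | ∃ s ∈ I, s ≤ t ∧ v = γ s - γ t} ⊆ C}

lemma hull_norm_lb {d : ℕ} {lam' : ℝ} (h0 : 0 ≤ lam')
    {S : Set (EuclideanSpace ℝ (Fin d))}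
    (hS : ∀ a ∈ S, ‖a‖ = 1)
    (hpair : ∀ a ∈ S, ∀ b ∈ S, -lam' ≤ ⟪a, b⟫) :
    ∀ x ∈ convexHull ℝ S, (1 - lam' * d) / (d + 1) ≤ ‖x‖ ^ 2 := by
  intro x hx
  obtain ⟨ι, hft, z, w, hzS, hai, hwpos, hwsum, hxeq⟩ :=
    eq_pos_convex_span_of_mem_convexHull hx
  have hzmem : ∀ i, z i ∈ S := fun i => hzS ⟨i, rfl⟩
  have hcard : (Fintype.card ι : ℝ) ≤ (d : ℝ) + 1 := by
    have h1 : Fintype.card ι ≤ Module.finrank ℝ (vectorSpan ℝ (Set.range z)) + 1 :=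
      hai.card_le_finrank_succ
    have h2 : Module.finrank ℝ (vectorSpan ℝ (Set.range z)) ≤ d := by
      have := Submodule.finrank_le (vectorSpan ℝ (Set.range z))
      simpa [finrank_euclideanSpace] using this
    exact_mod_cast h1.trans (by omega)
  have hnorm : ‖x‖ ^ 2 = ∑ i, ∑ j, (w i * w j) * ⟪z i, z j⟫ := by
    rw [← real_inner_self_eq_norm_sq, ← hxeq, sum_inner]
    refine Finset.sum_congr rfl fun i _ => ?_
    rw [inner_sum]
    refine Finset.sum_congr rfl fun j _ => ?_
    rw [real_inner_smul_left, real_inner_smul_right]; ring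
  have key : (1 + lam') * (∑ i, (w i) ^ 2) - lam' ≤ ∑ i, ∑ j, (w i * w j) * ⟪z i, z j⟫ := by
    have hdiag : ∀ i : ι, ⟪z i, z i⟫ = 1 := by
      intro i
      rw [real_inner_self_eq_norm_sq, hS _ (hzmem i)]; norm_num
    have h1 : ∀ i : ι, w i * w i * (⟪z i, z i⟫ + lam')
        ≤ ∑ j, w i * w j * (⟪z i, z j⟫ + lam') := by
      intro i
      refine Finset.single_le_sum
        (f := fun j => w i * w j * (⟪z i, z j⟫ + lam')) (fun j _ => ?_) (Finset.mem_univ i)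
      exact mul_nonneg (mul_nonneg (hwpos i).le (hwpos j).le)
        (by linarith [hpair _ (hzmem i) _ (hzmem j)])
    have h2 : ∑ i, (w i)^2 * (1 + lam') ≤ ∑ i, ∑ j, w i * w j * (⟪z i, z j⟫ + lam') := by
      refine Finset.sum_le_sum (fun i _ => ?_)
      have := h1 i
      rw [hdiag i] at this
      calc w i ^ 2 * (1 + lam') = w i * w i * (1 + lam') := by ring
        _ ≤ _ := this
    have h3 : ∑ i, ∑ j, w i * w j * (⟪z i, z j⟫ + lam')
        = (∑ i, ∑ j, (w i * w j) * ⟪z i, z j⟫) + lam' * ((∑ i, w i) * (∑ j, w j)) := by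
      rw [Finset.sum_mul_sum, Finset.mul_sum, ← Finset.sum_add_distrib]
      refine Finset.sum_congr rfl fun i _ => ?_
      rw [Finset.mul_sum, ← Finset.sum_add_distrib]
      exact Finset.sum_congr rfl fun j _ => by ring
    rw [h3, hwsum] at h2
    have h4 : (∑ i, (w i)^2 * (1 + lam')) = (1 + lam') * ∑ i, (w i)^2 := by
      rw [Finset.mul_sum]
      exact Finset.sum_congr rfl fun i _ => by ring
    nlinarith [h2]
  have hsq : 1 / ((d:ℝ) + 1) ≤ ∑ i, (w i) ^ 2 := by
    have hc := sq_sum_le_card_mul_sum_sq (s := (Finset.univ : Finset ι)) (f := w)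
    rw [hwsum] at hc
    simp only [Finset.card_univ, one_pow] at hc
    have hc' : (1:ℝ) ≤ (Fintype.card ι : ℝ) * ∑ i, (w i)^2 := by exact_mod_cast hc
    have hsum_nonneg : 0 ≤ ∑ i, (w i)^2 := by positivity
    rw [div_le_iff₀ (by positivity)]
    nlinarith
  have hd1 : (0:ℝ) < (d:ℝ) + 1 := by positivity
  have heq : (1 - lam' * d)/((d:ℝ)+1) = (1+lam') * (1/((d:ℝ)+1)) - lam' := by
    field_simp; ring
  calc (1 - lam' * d)/((d:ℝ)+1) = (1+lam') * (1/((d:ℝ)+1)) - lam' := heq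
    _ ≤ (1+lam') * (∑ i, (w i)^2) - lam' := by nlinarith
    _ ≤ ∑ i, ∑ j, (w i * w j) * ⟪z i, z j⟫ := key
    _ = ‖x‖ ^ 2 := hnorm.symm

set_option maxHeartbeats 1000000 in
/-- For continuous `λ`-curves with `λ ∈ [−1, 1/d)` there is `ρ > 0`
(depending only on `λ` and `d`) such that for every `t ∈ I` and every forward secant `q`
at `t` there is a unit vector `ξ` with `⟪ξ, u⟫ ≤ −ρ‖u‖` on `K(t)` and `⟪ξ, q⟫ ≥ ρ`. -/
theorem lambda_curve_repulsive_direction (d : ℕ) (hd : 1 ≤ d) (lam : ℝ)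
    (hlam₁ : -1 ≤ lam) (hlam₂ : lam < 1 / (d : ℝ)) :
    ∃ ρ : ℝ, 0 < ρ ∧
      ∀ (I : Set ℝ), I.OrdConnected →
        ∀ γ : ℝ → EuclideanSpace ℝ (Fin d), ContinuousOn γ I →
          (∀ t₁ ∈ I, ∀ t₂ ∈ I, ∀ t₃ ∈ I, t₁ ≤ t₂ → t₂ ≤ t₃ →
            ‖γ t₁ - γ t₂‖ ≤ ‖γ t₁ - γ t₃‖ + lam * ‖γ t₂ - γ t₃‖) →
          ∀ t ∈ I, ∀ q ∈ secPlus γ I t,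
            ∃ ξ : EuclideanSpace ℝ (Fin d), ‖ξ‖ = 1 ∧
              (∀ u ∈ coneK γ I t, ⟪ξ, u⟫ ≤ -ρ * ‖u‖) ∧
              ρ ≤ ⟪ξ, q⟫ := by
  have hd0 : (0:ℝ) < d := by exact_mod_cast hd
  have hdinv1 : (1:ℝ) / d ≤ 1 := by rw [div_le_one hd0]; exact_mod_cast hd
  have hlam_le1 : lam ≤ 1 := (hlam₂.le).trans hdinv1
  set lam' := max lam 0 with hlam'def
  have hlam'0 : 0 ≤ lam' := le_max_right _ _
  have hlamlam' : lam ≤ lam' := le_max_left _ _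
  have hlam'lt : lam' < 1 / d := max_lt hlam₂ (by positivity)
  have hr : 0 < (1 - lam' * d) / ((d:ℝ) + 1) := by
    apply div_pos _ (by positivity)
    have h1 : lam' * d < (1/d) * d := mul_lt_mul_of_pos_right hlam'lt hd0
    rw [one_div_mul_cancel hd0.ne'] at h1
    linarith
  set ρ := Real.sqrt ((1 - lam' * d) / ((d:ℝ) + 1)) with hρdef
  have hρ : 0 < ρ := Real.sqrt_pos.mpr hr
  have hρsq : ρ ^ 2 = (1 - lam' * d) / ((d:ℝ) + 1) := Real.sq_sqrt hr.le
  refine ⟨ρ, hρ, fun I _hI γ hγ hcurve t ht q hq => ?_⟩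
  obtain ⟨hq1, u, hu, hut, hqlim⟩ := hq
  set Sgen : Set (EuclideanSpace ℝ (Fin d)) := {v | ∃ s ∈ I, s ≤ t ∧ v = γ s - γ t}
    with hSgendef
  set S : Set (EuclideanSpace ℝ (Fin d)) :=
    {a | ∃ v ∈ Sgen, v ≠ 0 ∧ a = ‖v‖⁻¹ • v} ∪ {-q} with hSdef
  -- basic facts about the sequence
  have hεpos : ∀ k, 0 < ‖γ (u k) - γ t‖ := fun k =>
    norm_pos_iff.mpr (sub_ne_zero.mpr (hu k).2.2)
  have hγu : Tendsto (fun k => γ (u k)) atTop (nhds (γ t)) := by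
    have h1 : Tendsto u atTop (nhdsWithin t I) :=
      tendsto_nhdsWithin_iff.mpr ⟨hut, Eventually.of_forall fun k => (hu k).1⟩
    exact (hγ.continuousWithinAt ht).tendsto.comp h1
  have hε0 : Tendsto (fun k => ‖γ (u k) - γ t‖) atTop (nhds 0) := by
    have h2 : Tendsto (fun k => γ (u k) - γ t) atTop (nhds (γ t - γ t)) :=
      hγu.sub tendsto_const_nhds
    rw [sub_self] at h2
    simpa using h2.norm
  -- key inequality against the secant direction
  have keyq : ∀ v ∈ Sgen, ⟪v, q⟫ ≤ lam * ‖v‖ := by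
    rintro v ⟨s, hs, hst, rfl⟩
    have hk : ∀ k, ⟪γ s - γ t, (‖γ (u k) - γ t‖)⁻¹ • (γ (u k) - γ t)⟫
        ≤ lam * ‖γ s - γ t‖ + ‖γ (u k) - γ t‖ := by
      intro k
      set v := γ s - γ t with hvdef
      set wk := γ (u k) - γ t with hwkdef
      set ε := ‖γ (u k) - γ t‖ with hεdef
      have hε' : 0 < ε := hεpos k
      have hcu := hcurve s hs t ht (u k) (hu k).1 hst (hu k).2.1.le
      have hrw1 : γ s - γ (u k) = v - wk := by rw [hvdef, hwkdef]; abel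
      have hrw2 : ‖γ t - γ (u k)‖ = ε := by rw [norm_sub_rev]
      rw [hrw1, hrw2] at hcu
      have hexp : ‖v - wk‖ ^ 2 = ‖v‖ ^ 2 - 2 * ⟪v, wk⟫ + ε ^ 2 := by
        rw [norm_sub_sq_real] <;> ring
      have hCS : ⟪v, wk⟫ ≤ ‖v‖ * ε := real_inner_le_norm v wk
      have target : ⟪v, wk⟫ ≤ lam * ‖v‖ * ε + ε ^ 2 := by
        rcases le_or_gt 0 (‖v‖ - lam * ε) with h | h
        · have hab : ‖v‖ - lam * ε ≤ ‖v - wk‖ := by linarith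
          have hsq := pow_le_pow_left₀ h hab 2
          nlinarith [sq_nonneg lam, sq_nonneg ε, hε'.le]
        · nlinarith [norm_nonneg v, hε', mul_pos hε' hε']
      rw [real_inner_smul_right]
      have h5 : ε⁻¹ * ⟪v, wk⟫ ≤ ε⁻¹ * (lam * ‖v‖ * ε + ε ^ 2) :=
        mul_le_mul_of_nonneg_left target (by positivity)
      have h6 : ε⁻¹ * (lam * ‖v‖ * ε + ε ^ 2) = lam * ‖v‖ + ε := by
        field_simp
      linarith
    have hlim1 : Tendsto (fun k => ⟪γ s - γ t, (‖γ (u k) - γ t‖)⁻¹ • (γ (u k) - γ t)⟫)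
        atTop (nhds ⟪γ s - γ t, q⟫) := tendsto_const_nhds.inner hqlim
    have hlim2 : Tendsto (fun k => lam * ‖γ s - γ t‖ + ‖γ (u k) - γ t‖)
        atTop (nhds (lam * ‖γ s - γ t‖)) := by
      simpa using tendsto_const_nhds.add hε0
    exact le_of_tendsto_of_tendsto' hlim1 hlim2 hk
  -- key inequality between two backward chords
  have keygen : ∀ s₁ ∈ I, ∀ s₂ ∈ I, s₁ ≤ s₂ → s₂ ≤ t →
      -lam * (‖γ s₁ - γ t‖ * ‖γ s₂ - γ t‖) ≤ ⟪γ s₁ - γ t, γ s₂ - γ t⟫ := by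
    intro s₁ hs₁ s₂ hs₂ h12 h2t
    have hcu := hcurve s₁ hs₁ s₂ hs₂ t ht h12 h2t
    set v₁ := γ s₁ - γ t with hv₁def
    set v₂ := γ s₂ - γ t with hv₂def
    have hrw : γ s₁ - γ s₂ = v₁ - v₂ := by rw [hv₁def, hv₂def]; abel
    rw [hrw] at hcu
    have hsq := pow_le_pow_left₀ (norm_nonneg (v₁ - v₂)) hcu 2
    have hexp : ‖v₁ - v₂‖ ^ 2 = ‖v₁‖ ^ 2 - 2 * ⟪v₁, v₂⟫ + ‖v₂‖ ^ 2 := norm_sub_sq_real v₁ v₂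
    have hl2 : lam ^ 2 ≤ 1 := by nlinarith
    nlinarith [sq_nonneg ‖v₂‖, norm_nonneg v₁, norm_nonneg v₂]
  -- normalized versions
  have hq_gen : ∀ v ∈ Sgen, v ≠ 0 → ⟪‖v‖⁻¹ • v, q⟫ ≤ lam := by
    intro v hv hv0
    have h1 := keyq v hv
    have hvpos : 0 < ‖v‖ := norm_pos_iff.mpr hv0
    rw [real_inner_smul_left]
    calc ‖v‖⁻¹ * ⟪v, q⟫ ≤ ‖v‖⁻¹ * (lam * ‖v‖) :=
          mul_le_mul_of_nonneg_left h1 (by positivity)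
      _ = lam := by field_simp
  have hgg : ∀ s₁ ∈ I, ∀ s₂ ∈ I, s₁ ≤ s₂ → s₂ ≤ t →
      γ s₁ - γ t ≠ 0 → γ s₂ - γ t ≠ 0 →
      -lam ≤ ⟪‖γ s₁ - γ t‖⁻¹ • (γ s₁ - γ t), ‖γ s₂ - γ t‖⁻¹ • (γ s₂ - γ t)⟫ := by
    intro s₁ hs₁ s₂ hs₂ h12 h2t hne₁ hne₂
    have h1 := keygen s₁ hs₁ s₂ hs₂ h12 h2t
    set v₁ := γ s₁ - γ t
    set v₂ := γ s₂ - γ t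
    have hp₁ : 0 < ‖v₁‖ := norm_pos_iff.mpr hne₁
    have hp₂ : 0 < ‖v₂‖ := norm_pos_iff.mpr hne₂
    rw [real_inner_smul_left, real_inner_smul_right]
    calc -lam = ‖v₁‖⁻¹ * (‖v₂‖⁻¹ * (-lam * (‖v₁‖ * ‖v₂‖))) := by field_simp <;> ring
      _ ≤ ‖v₁‖⁻¹ * (‖v₂‖⁻¹ * ⟪v₁, v₂⟫) := by
          apply mul_le_mul_of_nonneg_left _ (by positivity)
          exact mul_le_mul_of_nonneg_left h1 (by positivity)
  -- properties of S
  have hSunit : ∀ a ∈ S, ‖a‖ = 1 := by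
    rintro a (⟨v, _hv, hv0, rfl⟩ | rfl)
    · rw [norm_smul, norm_inv, norm_norm, inv_mul_cancel₀ (norm_ne_zero_iff.mpr hv0)]
    · rw [norm_neg, hq1]
  have hSpair : ∀ a ∈ S, ∀ b ∈ S, -lam' ≤ ⟪a, b⟫ := by
    have hneg : -lam' ≤ -lam := neg_le_neg hlamlam'
    rintro a (⟨v₁, hv₁, hv₁0, rfl⟩ | rfl) b (⟨v₂, hv₂, hv₂0, rfl⟩ | rfl)
    · obtain ⟨s₁, hs₁, hs₁t, rfl⟩ := hv₁
      obtain ⟨s₂, hs₂, hs₂t, rfl⟩ := hv₂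
      rcases le_total s₁ s₂ with h | h
      · exact hneg.trans (hgg s₁ hs₁ s₂ hs₂ h hs₂t hv₁0 hv₂0)
      · rw [real_inner_comm]
        exact hneg.trans (hgg s₂ hs₂ s₁ hs₁ h hs₁t hv₂0 hv₁0)
    · rw [inner_neg_right]
      have := hq_gen v₁ hv₁ hv₁0
      linarith
    · rw [inner_neg_left, real_inner_comm]
      have := hq_gen v₂ hv₂ hv₂0
      linarith
    · rw [inner_neg_neg, real_inner_self_eq_norm_sq, hq1]
      norm_num; linarith
  -- norm lower bound on closure of the hull
  have hCnorm : ∀ x ∈ closure (convexHull ℝ S), ρ ≤ ‖x‖ := by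
    have hsub : closure (convexHull ℝ S) ⊆ {y | ρ ≤ ‖y‖} := by
      apply closure_minimal _ (isClosed_le continuous_const continuous_norm)
      intro y hy
      have h1 := hull_norm_lb hlam'0 hSunit hSpair y hy
      have h2 : ρ ^ 2 ≤ ‖y‖ ^ 2 := by rw [hρsq]; exact h1
      calc ρ = Real.sqrt (ρ ^ 2) := (Real.sqrt_sq hρ.le).symm
        _ ≤ Real.sqrt (‖y‖ ^ 2) := Real.sqrt_le_sqrt h2
        _ = ‖y‖ := Real.sqrt_sq (norm_nonneg y)
    exact fun x hx => hsub hx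
  -- projection of 0 on the closed convex hull
  have hmqS : -q ∈ S := Or.inr rfl
  have hCne : (closure (convexHull ℝ S)).Nonempty :=
    ⟨-q, subset_closure (subset_convexHull ℝ S hmqS)⟩
  have hCconv : Convex ℝ (closure (convexHull ℝ S)) := (convex_convexHull ℝ S).closure
  obtain ⟨v₀, hv₀C, hv₀min⟩ :=
    exists_norm_eq_iInf_of_complete_convex hCne isClosed_closure.isComplete hCconv 0
  have hproj := (norm_eq_iInf_iff_real_inner_le_zero hCconv hv₀C).mp hv₀min
  have hv₀ρ : ρ ≤ ‖v₀‖ := hCnorm _ hv₀C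
  have hv₀pos : 0 < ‖v₀‖ := lt_of_lt_of_le hρ hv₀ρ
  set ξ : EuclideanSpace ℝ (Fin d) := -(‖v₀‖⁻¹ • v₀) with hξdef
  have hkey : ∀ a ∈ closure (convexHull ℝ S), ⟪ξ, a⟫ ≤ -ρ := by
    intro a ha
    have h1 := hproj a ha
    rw [zero_sub, inner_neg_left, inner_sub_right] at h1
    have h2 : ‖v₀‖ ^ 2 ≤ ⟪v₀, a⟫ := by
      rw [← real_inner_self_eq_norm_sq]; linarith
    rw [hξdef, inner_neg_left, real_inner_smul_left]
    have h3 : ‖v₀‖ ≤ ‖v₀‖⁻¹ * ⟪v₀, a⟫ := by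
      calc ‖v₀‖ = ‖v₀‖⁻¹ * ‖v₀‖ ^ 2 := by field_simp
        _ ≤ _ := mul_le_mul_of_nonneg_left h2 (by positivity)
    linarith
  have hξnorm : ‖ξ‖ = 1 := by
    rw [hξdef, norm_neg, norm_smul, norm_inv, norm_norm, inv_mul_cancel₀ hv₀pos.ne']
  refine ⟨ξ, hξnorm, ?_, ?_⟩
  · -- the cone estimate
    intro x hx
    refine hx {y | ⟪ξ, y⟫ ≤ -ρ * ‖y‖} ⟨?_, ?_, ?_, ?_⟩
    · exact isClosed_le (Continuous.inner continuous_const continuous_id)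
        (continuous_const.mul continuous_norm)
    · intro y₁ hy₁ y₂ hy₂ a b ha hb hab
      simp only [Set.mem_setOf_eq] at hy₁ hy₂ ⊢
      rw [inner_add_right, real_inner_smul_right, real_inner_smul_right]
      have htr : ‖a • y₁ + b • y₂‖ ≤ a * ‖y₁‖ + b * ‖y₂‖ := by
        calc ‖a • y₁ + b • y₂‖ ≤ ‖a • y₁‖ + ‖b • y₂‖ := norm_add_le _ _
          _ = a * ‖y₁‖ + b * ‖y₂‖ := by
              rw [norm_smul, norm_smul, Real.norm_of_nonneg ha, Real.norm_of_nonneg hb]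
      nlinarith [mul_le_mul_of_nonneg_left hy₁ ha, mul_le_mul_of_nonneg_left hy₂ hb]
    · intro y hy r hr
      simp only [Set.mem_setOf_eq] at hy ⊢
      rw [real_inner_smul_right, norm_smul, Real.norm_of_nonneg hr]
      calc r * ⟪ξ, y⟫ ≤ r * (-ρ * ‖y‖) := mul_le_mul_of_nonneg_left hy hr
        _ = -ρ * (r * ‖y‖) := by ring
    · intro v hv
      simp only [Set.mem_setOf_eq]
      by_cases hv0 : v = 0
      · simp [hv0]
      · have hvhat : (‖v‖⁻¹ • v) ∈ closure (convexHull ℝ S) :=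
          subset_closure (subset_convexHull ℝ S (Or.inl ⟨v, hv, hv0, rfl⟩))
        have h1 := hkey _ hvhat
        have hvp : 0 < ‖v‖ := norm_pos_iff.mpr hv0
        rw [real_inner_smul_right] at h1
        have h2 : ‖v‖ * (‖v‖⁻¹ * ⟪ξ, v⟫) ≤ ‖v‖ * (-ρ) :=
          mul_le_mul_of_nonneg_left h1 hvp.le
        have h3 : ‖v‖ * (‖v‖⁻¹ * ⟪ξ, v⟫) = ⟪ξ, v⟫ := by field_simp
        linarith [h2, h3.symm.le]
  · -- the secant estimate
    have := hkey (-q) (subset_closure (subset_convexHull ℝ S hmqS))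
    rw [inner_neg_right] at this
    linarith
end

section
/- Let d ≥ 1 and λ ∈ [−1,1/d). Every continuous λ-curve γ : I → ℝ^d with bounded image has finite length: ℓ(γ) < ∞. -/
/-!
Let `x₀, x₁, …` be the points of a partition and `d λ < 1`. At the step from `x k` to `x (k+1)`,
the λ-condition for `x i, x j, x (k+1)` (`i ≤ j ≤ k`) says that the unit vectors from the `x i`
towards `x (k+1)` have pairwise inner products at least `-λ`. By Carathéodory, the point of least
norm in their convex hull then has norm at least `ε = √((1 - d λ) / (d + 1)) > 0`, so all these
vectors make inner product `≥ ε` with one unit vector, hence `≥ ε / 2` with a point `e` of a fixed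
finite `ε / 2`-net of the sphere. The λ-condition for `x i, x k, x (k+1)` also gives
`‖x (k+1) - x i‖ ≥ (1 - λ) / 2 * ‖x (k+1) - x k‖`. So the running maximum of `⟪x i, e⟫` grows by
at least `c * ‖x (k+1) - x k‖`, `c = ε / 2 * (1 - λ) / 2`; summing over the net, the length of the
polygon is at most `#net * diam / c`.
-/

open scoped RealInnerProductSpace
open Set Module Metric

variable {F : Type*} [NormedAddCommGroup F] [InnerProductSpace ℝ F]

theorem exists_mem_norm_sq_le_inner {K : Set F} (hne : K.Nonempty) (hK : IsComplete K)
    (hconv : Convex ℝ K) : ∃ v ∈ K, ∀ w ∈ K, ‖v‖ ^ 2 ≤ ⟪v, w⟫ := by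
  obtain ⟨v, hvK, hv⟩ := exists_norm_eq_iInf_of_complete_convex hne hK hconv 0
  refine ⟨v, hvK, fun w hw => ?_⟩
  have := (norm_eq_iInf_iff_real_inner_le_zero hconv hvK).1 hv w hw
  rw [zero_sub, inner_neg_left, inner_sub_right, real_inner_self_eq_norm_sq] at this
  linarith

theorem le_norm_sq_sum_smul {ι : Type*} [Fintype ι] {lam : ℝ} {w : ι → ℝ} {z : ι → F}
    (hw : ∀ i, 0 ≤ w i) (hz : ∀ i, ‖z i‖ = 1) (hpair : ∀ i j, -lam ≤ ⟪z i, z j⟫) :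
    (1 + lam) * ∑ i, w i ^ 2 - lam * (∑ i, w i) ^ 2 ≤ ‖∑ i, w i • z i‖ ^ 2 := by
  classical
  have hlhs : (1 + lam) * ∑ i, w i ^ 2 - lam * (∑ i, w i) ^ 2 =
      ∑ i, ∑ j, (w i * w j * -lam + if i = j then (1 + lam) * w i ^ 2 else 0) := by
    simp only [Finset.sum_add_distrib, Finset.sum_ite_eq, Finset.mem_univ, if_true,
      ← Finset.sum_mul, ← Finset.mul_sum]
    ring
  rw [hlhs, ← real_inner_self_eq_norm_sq]
  simp only [sum_inner, inner_sum, real_inner_smul_left, real_inner_smul_right, ← mul_assoc]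
  refine Finset.sum_le_sum fun i _ => Finset.sum_le_sum fun j _ => ?_
  split_ifs with hij
  · subst hij
    rw [real_inner_self_eq_norm_sq, hz]
    exact le_of_eq (by ring)
  · nlinarith [hpair j i, mul_nonneg (hw i) (hw j)]

theorem le_norm_sq_of_mem_convexHull [FiniteDimensional ℝ F] {lam : ℝ} {W : Set F}
    (hunit : ∀ w ∈ W, ‖w‖ = 1) (hpair : ∀ w ∈ W, ∀ w' ∈ W, -lam ≤ ⟪w, w'⟫) {v : F}
    (hv : v ∈ convexHull ℝ W) :
    (1 - finrank ℝ F * lam) / (finrank ℝ F + 1) ≤ ‖v‖ ^ 2 := by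
  obtain ⟨ι, _, z, w, hzW, hz, hwpos, hwsum, rfl⟩ := eq_pos_convex_span_of_mem_convexHull hv
  have hcard : (Fintype.card ι : ℝ) ≤ finrank ℝ F + 1 := by
    have := hz.card_le_finrank_succ.trans (Nat.add_le_add_right (Submodule.finrank_le _) 1)
    exact_mod_cast this
  obtain ⟨i₀⟩ : Nonempty ι := by
    by_contra h
    simp [not_nonempty_iff.1 h] at hwsum
  have hz₀ : ‖z i₀‖ ^ 2 = 1 := by rw [hunit _ (hzW ⟨i₀, rfl⟩), one_pow]
  have hlam : -lam ≤ 1 := by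
    simpa [real_inner_self_eq_norm_sq, hz₀] using hpair _ (hzW ⟨i₀, rfl⟩) _ (hzW ⟨i₀, rfl⟩)
  have hsq : 1 ≤ (finrank ℝ F + 1) * ∑ i, w i ^ 2 := by
    have := sq_sum_le_card_mul_sum_sq (s := Finset.univ) (f := w)
    rw [hwsum, Finset.card_univ] at this
    nlinarith [Finset.sum_nonneg fun i (_ : i ∈ Finset.univ) => sq_nonneg (w i)]
  have hgram := le_norm_sq_sum_smul (lam := lam) (fun i => (hwpos i).le)
    (fun i => hunit _ (hzW ⟨i, rfl⟩)) (fun i j => hpair _ (hzW ⟨i, rfl⟩) _ (hzW ⟨j, rfl⟩))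
  rw [hwsum, one_pow, mul_one] at hgram
  rw [div_le_iff₀ (by positivity)]
  nlinarith

noncomputable def capBound (d : ℕ) (lam : ℝ) : ℝ := √((1 - d * lam) / (d + 1))

theorem capBound_pos {d : ℕ} {lam : ℝ} (h : d * lam < 1) : 0 < capBound d lam :=
  Real.sqrt_pos.2 (div_pos (by linarith) (by positivity))

theorem exists_norm_eq_one_capBound_le_inner [FiniteDimensional ℝ F] {lam : ℝ}
    (hlam : finrank ℝ F * lam < 1) {W : Set F} (hW : W.Finite) (hne : W.Nonempty)
    (hunit : ∀ w ∈ W, ‖w‖ = 1) (hpair : ∀ w ∈ W, ∀ w' ∈ W, -lam ≤ ⟪w, w'⟫) :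
    ∃ z : F, ‖z‖ = 1 ∧ ∀ w ∈ W, capBound (finrank ℝ F) lam ≤ ⟪z, w⟫ := by
  obtain ⟨v, hv, hmin⟩ := exists_mem_norm_sq_le_inner (hne.mono (subset_convexHull ℝ W))
    (hW.isCompact_convexHull ℝ).isComplete (convex_convexHull ℝ W)
  have hcap : capBound (finrank ℝ F) lam ≤ ‖v‖ :=
    Real.sqrt_le_left (norm_nonneg v) |>.2 (le_norm_sq_of_mem_convexHull hunit hpair hv)
  have hv₀ : 0 < ‖v‖ := (capBound_pos hlam).trans_le hcap
  refine ⟨‖v‖⁻¹ • v, by rw [norm_smul, norm_inv, norm_norm, inv_mul_cancel₀ hv₀.ne'], ?_⟩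
  intro w hw
  rw [real_inner_smul_left, ← div_eq_inv_mul, le_div_iff₀ hv₀]
  nlinarith [hmin w (subset_convexHull ℝ W hw)]

theorem exists_norm_eq_one_capBound_mul_norm_le_inner [FiniteDimensional ℝ F] {lam : ℝ}
    (hlam : finrank ℝ F * lam < 1) {U : Set F} (hU : U.Finite) (hne : U.Nonempty)
    (hU₀ : ∀ u ∈ U, u ≠ 0) (hpair : ∀ u ∈ U, ∀ u' ∈ U, -lam * (‖u‖ * ‖u'‖) ≤ ⟪u, u'⟫) :
    ∃ z : F, ‖z‖ = 1 ∧ ∀ u ∈ U, capBound (finrank ℝ F) lam * ‖u‖ ≤ ⟪z, u⟫ := by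
  have hnorm : ∀ u ∈ U, 0 < ‖u‖ := fun u hu => norm_pos_iff.2 (hU₀ u hu)
  obtain ⟨z, hz, hzW⟩ := exists_norm_eq_one_capBound_le_inner hlam
    (hU.image fun u => ‖u‖⁻¹ • u) (hne.image _)
    (by
      rintro _ ⟨u, hu, rfl⟩
      rw [norm_smul, norm_inv, norm_norm, inv_mul_cancel₀ (hnorm u hu).ne'])
    (by
      rintro _ ⟨u, hu, rfl⟩ _ ⟨u', hu', rfl⟩
      rw [real_inner_smul_left, real_inner_smul_right, ← mul_assoc, ← mul_inv, mul_comm,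
        ← div_eq_mul_inv, le_div_iff₀ (mul_pos (hnorm u hu) (hnorm u' hu'))]
      exact hpair u hu u' hu')
  refine ⟨z, hz, fun u hu => ?_⟩
  have := hzW _ ⟨u, hu, rfl⟩
  rwa [real_inner_smul_right, ← div_eq_inv_mul, le_div_iff₀ (hnorm u hu)] at this

theorem one_sub_mul_norm_sub_le_two_mul {E : Type*} [SeminormedAddCommGroup E] {lam : ℝ}
    {a b p : E} (h : ‖a - b‖ ≤ ‖a - p‖ + lam * ‖b - p‖) :
    (1 - lam) * ‖p - b‖ ≤ 2 * ‖p - a‖ := by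
  have := norm_sub_le_norm_sub_add_norm_sub p a b
  rw [norm_sub_rev a p, norm_sub_rev b p] at h
  linarith

theorem neg_mul_norm_mul_norm_le_inner {lam : ℝ} {a b p : F}
    (h : ‖a - b‖ ≤ ‖a - p‖ + lam * ‖b - p‖) :
    -lam * (‖p - b‖ * ‖p - a‖) ≤ ⟪p - b, p - a⟫ := by
  have hsplit : p - b = (p - a) - (b - a) := by abel
  have hcs := real_inner_le_norm (b - a) (p - a)
  rw [norm_sub_rev a b, norm_sub_rev a p, norm_sub_rev b p] at h
  rw [hsplit, inner_sub_left, real_inner_self_eq_norm_sq, ← hsplit]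
  nlinarith [mul_le_mul_of_nonneg_right h (norm_nonneg (p - a))]

def IsLambdaCurve {α E : Type*} [Preorder α] [SeminormedAddCommGroup E] (lam : ℝ) (γ : α → E)
    (s : Set α) : Prop :=
  ∀ t₁ ∈ s, ∀ t₂ ∈ s, ∀ t₃ ∈ s, t₁ ≤ t₂ → t₂ ≤ t₃ →
    ‖γ t₁ - γ t₂‖ ≤ ‖γ t₁ - γ t₃‖ + lam * ‖γ t₂ - γ t₃‖

namespace IsLambdaCurve

theorem comp_monotone {α β E : Type*} [Preorder α] [Preorder β] [SeminormedAddCommGroup E]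
    {lam : ℝ} {γ : α → E} {s : Set α} (hγ : IsLambdaCurve lam γ s) {u : β → α}
    (hu : Monotone u) (hus : ∀ i, u i ∈ s) : IsLambdaCurve lam (γ ∘ u) univ :=
  fun _ _ _ _ _ _ h₁₂ h₂₃ => hγ _ (hus _) _ (hus _) _ (hus _) (hu h₁₂) (hu h₂₃)

variable [FiniteDimensional ℝ F] {lam : ℝ} {x : ℕ → F}

theorem exists_norm_eq_one_capBound_mul_norm_le_inner (hlam : finrank ℝ F * lam < 1)
    (hlam₁ : lam < 1) (hx : IsLambdaCurve lam x univ) {k : ℕ} (hk : x (k + 1) ≠ x k) :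
    ∃ z : F, ‖z‖ = 1 ∧ ∀ i ≤ k,
      capBound (finrank ℝ F) lam * ‖x (k + 1) - x i‖ ≤ ⟪z, x (k + 1) - x i⟫ := by
  have hne : ∀ i ≤ k, x (k + 1) - x i ≠ 0 := by
    intro i hi h
    have := one_sub_mul_norm_sub_le_two_mul (hx i trivial k trivial (k + 1) trivial hi k.le_succ)
    rw [h, norm_zero, mul_zero] at this
    exact hk (sub_eq_zero.1 (norm_le_zero_iff.1 (nonpos_of_mul_nonpos_right this
      (sub_pos.2 hlam₁))))
  obtain ⟨z, hz, hzU⟩ := _root_.exists_norm_eq_one_capBound_mul_norm_le_inner hlam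
    ((finite_Iic k).image fun i => x (k + 1) - x i) ⟨_, k, self_mem_Iic, rfl⟩
    (by rintro _ ⟨i, hi, rfl⟩; exact hne i hi)
    (by
      rintro _ ⟨i, hi, rfl⟩ _ ⟨j, hj, rfl⟩
      rcases le_total i j with hij | hji
      · rw [real_inner_comm, mul_comm ‖_‖]
        exact neg_mul_norm_mul_norm_le_inner
          (hx i trivial j trivial _ trivial hij (hj.trans k.le_succ))
      · exact neg_mul_norm_mul_norm_le_inner
          (hx j trivial i trivial _ trivial hji (hi.trans k.le_succ)))
  exact ⟨z, hz, fun i hi => hzU _ ⟨i, hi, rfl⟩⟩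

theorem exists_mem_inner_add_le (hlam : finrank ℝ F * lam < 1) (hlam₁ : lam < 1)
    (hx : IsLambdaCurve lam x univ) {E : Set F}
    (hE : sphere (0 : F) 1 ⊆ ⋃ e ∈ E, ball e (capBound (finrank ℝ F) lam / 2)) {k : ℕ}
    (hk : x (k + 1) ≠ x k) :
    ∃ e ∈ E, ∀ i ≤ k, ⟪x i, e⟫ + capBound (finrank ℝ F) lam / 2 * ((1 - lam) / 2) *
      ‖x (k + 1) - x k‖ ≤ ⟪x (k + 1), e⟫ := by
  set ε := capBound (finrank ℝ F) lam
  obtain ⟨z, hz, hzx⟩ := hx.exists_norm_eq_one_capBound_mul_norm_le_inner hlam hlam₁ hk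
  obtain ⟨e, he, hze⟩ := mem_iUnion₂.1 (hE (mem_sphere_zero_iff_norm.2 hz))
  refine ⟨e, he, fun i hi => ?_⟩
  have hfar :=
    one_sub_mul_norm_sub_le_two_mul (hx i trivial k trivial (k + 1) trivial hi k.le_succ)
  have hcs := real_inner_le_norm (z - e) (x (k + 1) - x i)
  have hclose : ‖z - e‖ * ‖x (k + 1) - x i‖ ≤ ε / 2 * ‖x (k + 1) - x i‖ :=
    mul_le_mul_of_nonneg_right (mem_ball_iff_norm.1 hze).le (norm_nonneg _)
  have hε : 0 ≤ ε / 2 := (half_pos (capBound_pos hlam)).le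
  have hdiff : ⟪e, x (k + 1) - x i⟫ = ⟪x (k + 1), e⟫ - ⟪x i, e⟫ := by
    rw [real_inner_comm, inner_sub_left]
  have hze' : ⟪e, x (k + 1) - x i⟫ = ⟪z, x (k + 1) - x i⟫ - ⟪z - e, x (k + 1) - x i⟫ := by
    rw [inner_sub_left]; ring
  linarith [hzx i hi, mul_le_mul_of_nonneg_left hfar hε]

theorem mul_sum_norm_sub_le (hlam : finrank ℝ F * lam < 1) (hlam₁ : lam < 1)
    (hx : IsLambdaCurve lam x univ) {E : Finset F} (hEs : ↑E ⊆ sphere (0 : F) 1)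
    (hE : sphere (0 : F) 1 ⊆ ⋃ e ∈ E, ball e (capBound (finrank ℝ F) lam / 2)) {D : ℝ}
    (hD : ∀ i, ‖x i - x 0‖ ≤ D) (n : ℕ) :
    capBound (finrank ℝ F) lam / 2 * ((1 - lam) / 2) * ∑ k ∈ Finset.range n, ‖x (k + 1) - x k‖ ≤
      E.card * D := by
  set c := capBound (finrank ℝ F) lam / 2 * ((1 - lam) / 2)
  set M : F → ℕ → ℝ := fun e => partialSups fun i => ⟪x i, e⟫
  have hM : ∀ e k, M e k ≤ M e (k + 1) := fun e k => (partialSups _).monotone k.le_succ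
  have hstep : ∀ k, c * ‖x (k + 1) - x k‖ ≤ ∑ e ∈ E, (M e (k + 1) - M e k) := by
    intro k
    by_cases hk : x (k + 1) = x k
    · rw [hk, sub_self, norm_zero, mul_zero]
      exact Finset.sum_nonneg fun e _ => sub_nonneg.2 (hM e k)
    obtain ⟨e, he, hinc⟩ := exists_mem_inner_add_le hlam hlam₁ hx hE hk
    have : M e k + c * ‖x (k + 1) - x k‖ ≤ M e (k + 1) := by
      rw [← le_sub_iff_add_le]
      refine (partialSups_le _ _ _ fun i hi => le_sub_iff_add_le.2 (hinc i hi)).trans ?_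
      simp only [M, partialSups_add_one]
      exact sub_le_sub_right le_sup_right _
    exact (le_sub_iff_add_le'.2 this).trans
      (Finset.single_le_sum (fun e _ => sub_nonneg.2 (hM e k)) he)
  have htel : ∀ e ∈ E, M e n - M e 0 ≤ D := by
    intro e he
    have he₁ : ‖e‖ = 1 := mem_sphere_zero_iff_norm.1 (hEs he)
    refine sub_le_iff_le_add'.2 (partialSups_le _ _ _ fun i _ => ?_)
    have := real_inner_le_norm (x i - x 0) e
    rw [inner_sub_left, he₁, mul_one] at this
    simp only [M, partialSups_zero]
    linarith [hD i]
  calc c * ∑ k ∈ Finset.range n, ‖x (k + 1) - x k‖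
      ≤ ∑ k ∈ Finset.range n, ∑ e ∈ E, (M e (k + 1) - M e k) := by
        rw [Finset.mul_sum]; exact Finset.sum_le_sum fun k _ => hstep k
    _ = ∑ e ∈ E, (M e n - M e 0) := by
        rw [Finset.sum_comm]; exact Finset.sum_congr rfl fun e _ => Finset.sum_range_sub _ n
    _ ≤ E.card * D := by
        simpa using Finset.sum_le_sum htel

theorem eVariationOn_lt_top {α : Type*} [LinearOrder α] {γ : α → F} {s : Set α}
    (hlam : finrank ℝ F * lam < 1) (hlam₁ : lam < 1) (hγ : IsLambdaCurve lam γ s)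
    (hbdd : Bornology.IsBounded (γ '' s)) : eVariationOn γ s < ⊤ := by
  obtain ⟨E, hEs, hEfin, hE⟩ :=
    (isCompact_sphere (0 : F) 1).finite_cover_balls (half_pos (capBound_pos hlam))
  lift E to Finset F using hEfin
  obtain ⟨D, hD⟩ := isBounded_iff.1 hbdd
  set c := capBound (finrank ℝ F) lam / 2 * ((1 - lam) / 2)
  have hc : 0 < c := mul_pos (half_pos (capBound_pos hlam)) (by linarith)
  refine lt_of_le_of_lt (b := ENNReal.ofReal (E.card * D / c)) ?_ ENNReal.ofReal_lt_top
  refine iSup_le ?_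
  rintro ⟨n, u, hu, hus⟩
  have hxD (i : ℕ) : ‖γ (u i) - γ (u 0)‖ ≤ D := by
    simpa [dist_eq_norm] using hD (mem_image_of_mem γ (hus i)) (mem_image_of_mem γ (hus 0))
  have := (hγ.comp_monotone hu hus).mul_sum_norm_sub_le hlam hlam₁ hEs hE hxD n
  simp only [edist_dist, dist_eq_norm]
  rw [← ENNReal.ofReal_sum_of_nonneg fun _ _ => norm_nonneg _]
  exact ENNReal.ofReal_le_ofReal ((le_div_iff₀' hc).2 this)

end IsLambdaCurve

theorem lambda_curve_finite_length_general (d : ℕ) (lam : ℝ)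
    (hlam₂ : lam < 1 / (d : ℝ))
    (I : Set ℝ)
    (γ : ℝ → EuclideanSpace ℝ (Fin d))
    (hbdd : Bornology.IsBounded (γ '' I))
    (hγ : ∀ t₁ ∈ I, ∀ t₂ ∈ I, ∀ t₃ ∈ I, t₁ ≤ t₂ → t₂ ≤ t₃ →
      ‖γ t₁ - γ t₂‖ ≤ ‖γ t₁ - γ t₃‖ + lam * ‖γ t₂ - γ t₃‖) :
    eVariationOn γ I < ⊤ := by
  have hlam_lt_one : lam < 1 := hlam₂.trans_le (by simpa using Nat.cast_inv_le_one (α := ℝ) d)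
  have hdlam : (finrank ℝ (EuclideanSpace ℝ (Fin d)) : ℝ) * lam < 1 := by
    rw [finrank_euclideanSpace_fin]
    rcases d.eq_zero_or_pos with rfl | hd
    · simp
    · rwa [lt_div_iff₀ (by positivity), mul_comm] at hlam₂
  exact IsLambdaCurve.eVariationOn_lt_top hdlam hlam_lt_one hγ hbdd

/-- **rectifiability.** Every continuous `λ`-curve in `ℝ^d` (`d ≥ 1`,
`λ ∈ [−1, 1/d)`) with bounded image has finite length. -/
theorem lambda_curve_finite_length (d : ℕ) (hd : 1 ≤ d) (lam : ℝ)
    (hlam₁ : -1 ≤ lam) (hlam₂ : lam < 1 / (d : ℝ))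
    (I : Set ℝ) (hI : I.OrdConnected)
    (γ : ℝ → EuclideanSpace ℝ (Fin d))
    (hcont : ContinuousOn γ I)
    (hbdd : Bornology.IsBounded (γ '' I))
    (hγ : ∀ t₁ ∈ I, ∀ t₂ ∈ I, ∀ t₃ ∈ I, t₁ ≤ t₂ → t₂ ≤ t₃ →
      ‖γ t₁ - γ t₂‖ ≤ ‖γ t₁ - γ t₃‖ + lam * ‖γ t₂ - γ t₃‖) :
    eVariationOn γ I < ⊤ :=
  lambda_curve_finite_length_general d lam hlam₂ I γ hbdd hγ
end

section
/- Let λ ∈ [−1,1) and let γ : I → ℝ^d be an injective continuously differentiable curve with γ'(τ) ≠ 0 for every τ ∈ I, satisfying the λ-eel inequality: ⟨γ'(τ), γ(t) − γ(τ)⟩ ≤ λ‖γ'(τ)‖‖γ(t) − γ(τ)‖ for all t < τ in I. Then for every t₁ ∈ I the function t ↦ ‖γ(t) − γ(t₁)‖ + λ·ℓ(γ restricted to [t₁,t]) is non-decreasing on I ∩ [t₁, ∞). -/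
open scoped RealInnerProductSpace
open Set intervalIntegral MeasureTheory

variable {d : ℕ} {I : Set ℝ} {γ γ' : ℝ → EuclideanSpace ℝ (Fin d)}

lemma eel_ftc (hderiv : ∀ τ ∈ I, HasDerivWithinAt γ (γ' τ) I τ)
    (hcont : ContinuousOn γ' I) {a b : ℝ} (hab : a ≤ b) (hsub : Icc a b ⊆ I) :
    ∫ x in a..b, γ' x = γ b - γ a := by
  refine integral_eq_sub_of_hasDeriv_right_of_le hab
    (fun x hx => ((hderiv x (hsub hx)).continuousWithinAt).mono hsub)
    (fun x hx => ?_)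
    ((hcont.mono (by rw [uIcc_of_le hab]; exact hsub)).intervalIntegrable)
  have hxI : I ∈ nhds x := mem_nhds_iff.mpr ⟨Ioo a b, (Ioo_subset_Icc_self).trans hsub, isOpen_Ioo, hx⟩
  exact ((hderiv x (hsub (Ioo_subset_Icc_self hx))).hasDerivAt hxI).hasDerivWithinAt

lemma eel_evar_le_integral (hderiv : ∀ τ ∈ I, HasDerivWithinAt γ (γ' τ) I τ)
    (hcont : ContinuousOn γ' I) {a b : ℝ} (hab : a ≤ b) (hsub : Icc a b ⊆ I) :
    eVariationOn γ (Icc a b) ≤ ENNReal.ofReal (∫ x in a..b, ‖γ' x‖) := by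
  have hint : ∀ c d, c ∈ Icc a b → d ∈ Icc a b →
      IntervalIntegrable (fun x => ‖γ' x‖) volume c d := fun c d hc hd =>
    ((hcont.norm).mono ((uIcc_subset_Icc hc hd).trans hsub)).intervalIntegrable
  refine iSup_le ?_
  rintro ⟨n, u, hu, us⟩
  calc ∑ i ∈ Finset.range n, edist (γ (u (i + 1))) (γ (u i))
      ≤ ∑ i ∈ Finset.range n, ENNReal.ofReal (∫ x in (u i)..(u (i+1)), ‖γ' x‖) := by
        refine Finset.sum_le_sum fun i _ => ?_
        rw [edist_dist, dist_eq_norm]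
        apply ENNReal.ofReal_le_ofReal
        have h1 : u i ≤ u (i + 1) := hu (Nat.le_succ i)
        have hs2 : Icc (u i) (u (i+1)) ⊆ I :=
          (Icc_subset_Icc (us i).1 (us (i+1)).2).trans hsub
        rw [← eel_ftc hderiv hcont h1 hs2]
        exact norm_integral_le_integral_norm h1
    _ = ENNReal.ofReal (∑ i ∈ Finset.range n, ∫ x in (u i)..(u (i+1)), ‖γ' x‖) :=
        (ENNReal.ofReal_sum_of_nonneg fun i _ =>
          intervalIntegral.integral_nonneg (hu (Nat.le_succ i)) (fun x _ => norm_nonneg _)).symm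
    _ = ENNReal.ofReal (∫ x in (u 0)..(u n), ‖γ' x‖) := by
        rw [sum_integral_adjacent_intervals (fun k _ => hint _ _ (us k) (us (k+1)))]
    _ ≤ ENNReal.ofReal (∫ x in a..b, ‖γ' x‖) := by
        apply ENNReal.ofReal_le_ofReal
        refine integral_mono_interval (us 0).1 (hu (Nat.zero_le n)) (us n).2
          (Filter.Eventually.of_forall fun x => norm_nonneg _) (hint a b ⟨le_rfl, hab⟩ ⟨hab, le_rfl⟩)

/-- **Lyapunov function for λ-eels.** If `γ : I → ℝ^d` is an injective `C¹`
curve with nonvanishing derivative satisfying the `λ`-eel inequality, then for every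
`t₁ ∈ I` the function `t ↦ ‖γ(t) − γ(t₁)‖ + λ·ℓ(γ|[t₁,t])` is non-decreasing on
`I ∩ [t₁, ∞)`. -/
theorem lambda_eel_lyapunov (d : ℕ) (lam : ℝ) (hlam₁ : -1 ≤ lam) (hlam₂ : lam < 1)
    (I : Set ℝ) (hI : I.OrdConnected)
    (γ γ' : ℝ → EuclideanSpace ℝ (Fin d))
    (hinj : Set.InjOn γ I)
    (hderiv : ∀ τ ∈ I, HasDerivWithinAt γ (γ' τ) I τ)
    (hderiv_cont : ContinuousOn γ' I)
    (hne : ∀ τ ∈ I, γ' τ ≠ 0)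
    (heel : ∀ t ∈ I, ∀ τ ∈ I, t < τ →
      ⟪γ' τ, γ t - γ τ⟫ ≤ lam * ‖γ' τ‖ * ‖γ t - γ τ‖)
    (t₁ : ℝ) (ht₁ : t₁ ∈ I) :
    ∀ s ∈ I, ∀ t ∈ I, t₁ ≤ s → s ≤ t →
      ‖γ s - γ t₁‖ + lam * (eVariationOn γ (I ∩ Set.Icc t₁ s)).toReal ≤
        ‖γ t - γ t₁‖ + lam * (eVariationOn γ (I ∩ Set.Icc t₁ t)).toReal := by
  intro s hs t ht hts hst
  have hst' : t₁ ≤ t := hts.trans hst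
  have hIcc : ∀ x ∈ I, I ∩ Icc t₁ x = Icc t₁ x := fun x hx =>
    inter_eq_self_of_subset_right (hI.out ht₁ hx)
  rw [hIcc s hs, hIcc t ht]
  have hsubt : Icc t₁ t ⊆ I := hI.out ht₁ ht
  set v : ℝ → ℝ := fun u => (eVariationOn γ (Icc t₁ u)).toReal with hv
  have hfin : ∀ c x : ℝ, t₁ ≤ c → c ≤ x → x ≤ t → eVariationOn γ (Icc c x) ≠ ⊤ := by
    intro c x h1 h2 h3
    have hsub : Icc c x ⊆ I := (Icc_subset_Icc h1 h3).trans hsubt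
    exact ((eel_evar_le_integral hderiv hderiv_cont h2 hsub).trans_lt ENNReal.ofReal_lt_top).ne
  have hvsub : ∀ c x : ℝ, t₁ ≤ c → c ≤ x → x ≤ t →
      v x - v c = (eVariationOn γ (Icc c x)).toReal := by
    intro c x h1 h2 h3
    have key := eVariationOn.Icc_add_Icc γ (s := univ) h1 h2 (mem_univ c)
    simp only [univ_inter] at key
    rw [hv]
    simp only
    rw [← key, ENNReal.toReal_add (hfin t₁ c le_rfl h1 (h2.trans h3)) (hfin c x h1 h2 h3)]
    ring
  have hv_ge : ∀ c x : ℝ, t₁ ≤ c → c ≤ x → x ≤ t → ‖γ x - γ c‖ ≤ v x - v c := by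
    intro c x h1 h2 h3
    rw [hvsub c x h1 h2 h3, ← dist_eq_norm, dist_edist]
    exact ENNReal.toReal_mono (hfin c x h1 h2 h3)
      (eVariationOn.edist_le γ (x := x) (y := c) ⟨h2, le_rfl⟩ ⟨le_rfl, h2⟩)
  have hAint : ∀ c x : ℝ, c ∈ Icc t₁ t → x ∈ Icc t₁ t →
      IntervalIntegrable (fun z => ‖γ' z‖) volume c x := fun c x hc hx =>
    ((hderiv_cont.norm).mono ((uIcc_subset_Icc hc hx).trans hsubt)).intervalIntegrable
  have hv_le : ∀ c x : ℝ, t₁ ≤ c → c ≤ x → x ≤ t →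
      v x - v c ≤ ∫ z in c..x, ‖γ' z‖ := by
    intro c x h1 h2 h3
    rw [hvsub c x h1 h2 h3]
    exact ENNReal.toReal_le_of_le_ofReal
      (intervalIntegral.integral_nonneg h2 fun z _ => norm_nonneg _)
      (eel_evar_le_integral hderiv hderiv_cont h2 ((Icc_subset_Icc h1 h3).trans hsubt))
  -- Lipschitz bound and continuity of v
  obtain ⟨C, hC⟩ := (isCompact_Icc (a := t₁) (b := t)).exists_bound_of_continuousOn
    (hderiv_cont.norm.mono hsubt)
  have hvlip : ∀ c x : ℝ, t₁ ≤ c → c ≤ x → x ≤ t → v x - v c ≤ C * (x - c) := by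
    intro c x h1 h2 h3
    refine (hv_le c x h1 h2 h3).trans ?_
    calc ∫ z in c..x, ‖γ' z‖ ≤ |∫ z in c..x, ‖γ' z‖| := le_abs_self _
      _ ≤ C * |x - c| := by
          rw [← Real.norm_eq_abs]
          refine intervalIntegral.norm_integral_le_of_norm_le_const fun z hz => ?_
          rw [Real.norm_eq_abs, abs_of_nonneg (norm_nonneg _)]
          have : z ∈ Icc t₁ t := by
            rw [uIoc_of_le h2] at hz
            exact ⟨h1.trans hz.1.le, hz.2.trans h3⟩
          simpa using hC z this
      _ = C * (x - c) := by rw [abs_of_nonneg (sub_nonneg.mpr h2)]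
  have hvcont : ContinuousOn v (Icc t₁ t) := by
    have hlip : LipschitzOnWith (Real.toNNReal C) v (Icc t₁ t) := by
      apply LipschitzOnWith.of_dist_le_mul
      intro x hx y hy
      rcases le_total y x with h | h
      · rw [Real.dist_eq, Real.dist_eq, abs_of_nonneg (sub_nonneg.mpr h),
          abs_of_nonneg ((norm_nonneg (γ x - γ y)).trans (hv_ge y x hy.1 h hx.2))]
        exact (hvlip y x hy.1 h hx.2).trans
          (mul_le_mul_of_nonneg_right (Real.le_coe_toNNReal C) (sub_nonneg.mpr h))
      · rw [dist_comm, dist_comm x y, Real.dist_eq, Real.dist_eq,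
          abs_of_nonneg (sub_nonneg.mpr h),
          abs_of_nonneg ((norm_nonneg (γ y - γ x)).trans (hv_ge x y hx.1 h hy.2))]
        exact (hvlip x y hx.1 h hy.2).trans
          (mul_le_mul_of_nonneg_right (Real.le_coe_toNNReal C) (sub_nonneg.mpr h))
    exact hlip.continuousOn
  have hγcont : ContinuousOn γ (Icc t₁ t) :=
    fun x hx => ((hderiv x (hsubt hx)).continuousWithinAt).mono hsubt
  set F : ℝ → ℝ := fun u => ‖γ u - γ t₁‖ + lam * v u with hF
  have hFcont : ContinuousOn F (Icc t₁ t) :=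
    ((hγcont.sub continuousOn_const).norm).add (continuousOn_const.mul hvcont)
  -- derivative of F at interior points
  have hkey : ∀ x ∈ Ioo t₁ t, HasDerivAt F
      (⟪γ x - γ t₁, γ' x⟫ / ‖γ x - γ t₁‖ + lam * ‖γ' x‖) x := by
    intro x hx
    have hxI : x ∈ I := hsubt (Ioo_subset_Icc_self hx)
    have hnx : I ∈ nhds x :=
      mem_nhds_iff.mpr ⟨Ioo t₁ t, (Ioo_subset_Icc_self).trans hsubt, isOpen_Ioo, hx⟩
    have hγx : HasDerivAt γ (γ' x) x := (hderiv x hxI).hasDerivAt hnx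
    have hsub2 : HasDerivAt (fun u => γ u - γ t₁) (γ' x) x := hγx.sub_const _
    have hne' : γ x - γ t₁ ≠ 0 := sub_ne_zero.mpr fun h => hx.1.ne' (hinj hxI ht₁ h)
    have hsq : ‖γ x - γ t₁‖ ^ 2 ≠ 0 := pow_ne_zero _ (norm_ne_zero_iff.mpr hne')
    have h1 := (hsub2.norm_sq).sqrt hsq
    simp only [Real.sqrt_sq, norm_nonneg] at h1
    rw [mul_div_mul_left _ _ (two_ne_zero (α := ℝ))] at h1
    -- derivative of v : squeeze argument
    have hA : HasDerivAt (fun u => ∫ z in t₁..u, ‖γ' z‖) (‖γ' x‖) x := by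
      refine intervalIntegral.integral_hasDerivAt_right
        (hAint t₁ x ⟨le_rfl, hst'⟩ (Ioo_subset_Icc_self hx)) ?_ ((hderiv_cont.norm).continuousAt hnx)
      exact ((hderiv_cont.norm).mono ((Ioo_subset_Icc_self).trans hsubt)).stronglyMeasurableAtFilter
        isOpen_Ioo x hx
    have hbase : ∀ c z : ℝ, t₁ ≤ c → c < z → z ≤ t → ‖slope γ c z‖ ≤ slope v c z ∧
        slope v c z ≤ slope (fun u => ∫ w in t₁..u, ‖γ' w‖) c z := by
      intro c z h1' h2 h3
      have hz : (0:ℝ) < z - c := sub_pos.mpr h2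
      constructor
      · rw [slope_def_module, norm_smul, norm_inv, Real.norm_eq_abs, abs_of_pos hz,
          slope_def_field, div_eq_inv_mul]
        exact mul_le_mul_of_nonneg_left (hv_ge c z h1' h2.le h3) (inv_nonneg.mpr hz.le)
      · rw [slope_def_field, slope_def_field]
        have hzmem : z ∈ Icc t₁ t := ⟨h1'.trans h2.le, h3⟩
        have hcmem : c ∈ Icc t₁ t := ⟨h1', h2.le.trans h3⟩
        have hAdiff : (∫ w in t₁..z, ‖γ' w‖) - (∫ w in t₁..c, ‖γ' w‖) = ∫ w in c..z, ‖γ' w‖ :=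
          integral_interval_sub_left (hAint t₁ z ⟨le_rfl, hst'⟩ hzmem)
            (hAint t₁ c ⟨le_rfl, hst'⟩ hcmem)
        rw [hAdiff]
        gcongr
        exact hv_le c z h1' h2.le h3
    have hvder : HasDerivAt v (‖γ' x‖) x := by
      have hsmem : Ioo t₁ t ∈ nhds x := isOpen_Ioo.mem_nhds hx
      have hbound : ∀ y ∈ Ioo t₁ t \ {x}, ‖slope γ x y‖ ≤ slope v x y ∧
          slope v x y ≤ slope (fun u => ∫ w in t₁..u, ‖γ' w‖) x y := by
        intro y hy
        have hyne : y ≠ x := hy.2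
        rcases hyne.lt_or_gt with h | h
        · have hb := hbase y x hy.1.1.le h hx.2.le
          exact ⟨by rw [slope_comm γ x y, slope_comm v x y]; exact hb.1,
            by rw [slope_comm v x y, slope_comm _ x y]; exact hb.2⟩
        · exact hbase x y hx.1.le h hy.1.2.le
      refine (hasDerivWithinAt_iff_tendsto_slope.mpr ?_).hasDerivAt hsmem
      refine tendsto_of_tendsto_of_tendsto_of_le_of_le'
        (((hasDerivAt_iff_tendsto_slope.mp hγx).norm).mono_left
          (nhdsWithin_mono x (fun y hy => hy.2)))
        ((hasDerivAt_iff_tendsto_slope.mp hA).mono_left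
          (nhdsWithin_mono x (fun y hy => hy.2)))
        (eventually_mem_nhdsWithin.mono fun y hy => (hbound y hy).1)
        (eventually_mem_nhdsWithin.mono fun y hy => (hbound y hy).2)
    exact h1.add (hvder.const_mul lam)
  -- nonnegativity of the derivative
  have hpos : ∀ x ∈ Ioo t₁ t, 0 ≤ ⟪γ x - γ t₁, γ' x⟫ / ‖γ x - γ t₁‖ + lam * ‖γ' x‖ := by
    intro x hx
    have hxI : x ∈ I := hsubt (Ioo_subset_Icc_self hx)
    have hne' : γ x - γ t₁ ≠ 0 := sub_ne_zero.mpr fun h => hx.1.ne' (hinj hxI ht₁ h)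
    have hnorm_pos : 0 < ‖γ x - γ t₁‖ := norm_pos_iff.mpr hne'
    have he := heel t₁ ht₁ x hxI hx.1
    rw [show γ t₁ - γ x = -(γ x - γ t₁) from (neg_sub _ _).symm, inner_neg_right, norm_neg] at he
    have h3 : -(lam * ‖γ' x‖) ≤ ⟪γ x - γ t₁, γ' x⟫ / ‖γ x - γ t₁‖ := by
      rw [le_div_iff₀ hnorm_pos, real_inner_comm]
      nlinarith [he]
    linarith [h3]
  -- conclude via monotonicity
  have hmono : MonotoneOn F (Icc t₁ t) := by
    refine monotoneOn_of_deriv_nonneg (convex_Icc t₁ t) hFcont ?_ ?_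
    · rw [interior_Icc]
      exact fun x hx => (hkey x hx).differentiableAt.differentiableWithinAt
    · rw [interior_Icc]
      intro x hx
      rw [(hkey x hx).deriv]
      exact hpos x hx
  exact hmono ⟨hts, hst⟩ ⟨hst', le_rfl⟩ hst
end

section
/- There exists a constant μ ∈ (0,1/2) such that for every r > 0 the helix γ : ℝ → ℝ³ defined by γ(t) = (r cos t, r sin t, μ r t) is self-expanded with respect to the Euclidean norm, i.e., for all t₁ ≤ t₂ ≤ t₃ in ℝ one has ‖γ(t₁) − γ(t₂)‖ ≤ ‖γ(t₁) − γ(t₃)‖. -/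
open scoped RealInnerProductSpace
open Set

/-- The helix `t ↦ (r cos t, r sin t, μ r t)` in `ℝ³`. -/
noncomputable def helix (r μ t : ℝ) : EuclideanSpace ℝ (Fin 3) :=
  WithLp.toLp 2 ![r * Real.cos t, r * Real.sin t, μ * r * t]

/-!
Two points of the helix at parameter distance `s` are at squared distance
`r² (2 - 2 cos s + μ² s²)`, so self-expansion amounts to this function of `s` being monotone on
`[0, ∞)`, i.e. to `sin s + μ² s ≥ 0` for `s ≥ 0`. This is clear on `[0, π]` and once `μ² s ≥ 1`;
in between, `-sin s = sin (s - π) ≤ s - π ≤ μ² s` as soon as `μ² ≥ 1 / (1 + π)`, and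
`1 / (1 + π) < 1 / 4` leaves room for some `μ < 1 / 2`.
-/

open Real

theorem Real.sin_add_mul_nonneg {c s : ℝ} (hc : 1 / (1 + π) ≤ c) (hs : 0 ≤ s) :
    0 ≤ sin s + c * s := by
  have hc₀ : 0 < c := lt_of_lt_of_le (by positivity) hc
  rcases le_or_gt s π with hsπ | hπs
  · exact add_nonneg (sin_nonneg_of_nonneg_of_le_pi hs hsπ) (mul_nonneg hc₀.le hs)
  rcases le_or_gt 1 (c * s) with hcs | hcs
  · linarith [neg_one_le_sin s]
  have hsin : -sin s ≤ s - π := by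
    rw [← sin_sub_pi]; exact sin_le (by linarith)
  have hπc : 1 ≤ c * (1 + π) := by
    rwa [div_le_iff₀ (by positivity)] at hc
  have hc₁ : c ≤ 1 := by nlinarith [pi_gt_three]
  have hshift : s - π ≤ c * s := by
    nlinarith [mul_nonneg (sub_nonneg.mpr hc₁) (sub_nonneg.mpr hcs.le)]
  linarith

noncomputable def helixChordSq (μ s : ℝ) : ℝ :=
  2 - 2 * cos s + μ ^ 2 * s ^ 2

theorem hasDerivAt_helixChordSq (μ s : ℝ) :
    HasDerivAt (helixChordSq μ) (2 * (sin s + μ ^ 2 * s)) s := by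
  refine ((((hasDerivAt_cos s).const_mul 2).const_sub 2).add
    ((hasDerivAt_pow 2 s).const_mul (μ ^ 2))).congr_deriv ?_
  push_cast
  ring

theorem monotoneOn_helixChordSq {μ : ℝ} (hμ : 1 / (1 + π) ≤ μ ^ 2) :
    MonotoneOn (helixChordSq μ) (Ici 0) := by
  refine monotoneOn_of_hasDerivWithinAt_nonneg (convex_Ici 0)
    (fun s _ ↦ (hasDerivAt_helixChordSq μ s).continuousAt.continuousWithinAt)
    (fun s _ ↦ (hasDerivAt_helixChordSq μ s).hasDerivWithinAt) fun s hs ↦ ?_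
  rw [interior_Ici] at hs
  linarith [sin_add_mul_nonneg hμ (le_of_lt hs)]

theorem norm_helix_sub_sq (r μ a b : ℝ) :
    ‖helix r μ a - helix r μ b‖ ^ 2 = r ^ 2 * helixChordSq μ (b - a) := by
  rw [EuclideanSpace.norm_sq_eq, Fin.sum_univ_three]
  simp only [helix, helixChordSq, PiLp.sub_apply, Matrix.cons_val_zero,
    Matrix.cons_val_one, Matrix.cons_val_two, Matrix.head_cons, Matrix.tail_cons,
    Real.norm_eq_abs, sq_abs, cos_sub]
  nlinarith [sin_sq_add_cos_sq a, sin_sq_add_cos_sq b]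

theorem norm_helix_sub_le {μ : ℝ} (hμ : 1 / (1 + π) ≤ μ ^ 2) (r : ℝ) {t₁ t₂ t₃ : ℝ}
    (h₁₂ : t₁ ≤ t₂) (h₂₃ : t₂ ≤ t₃) :
    ‖helix r μ t₁ - helix r μ t₂‖ ≤ ‖helix r μ t₁ - helix r μ t₃‖ := by
  refine (pow_le_pow_iff_left₀ (norm_nonneg _) (norm_nonneg _) two_ne_zero).mp ?_
  rw [norm_helix_sub_sq, norm_helix_sub_sq]
  exact mul_le_mul_of_nonneg_left
    (monotoneOn_helixChordSq hμ (by simpa using h₁₂) (by simpa using h₁₂.trans h₂₃) (by linarith))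
    (sq_nonneg r)

/-- There is `μ ∈ (0,1/2)` such that for every `r > 0` the helix
`t ↦ (r cos t, r sin t, μ r t)` is self-expanded with respect to the Euclidean norm. -/
theorem exists_mu_helix_selfExpanded :
    ∃ μ : ℝ, 0 < μ ∧ μ < 1 / 2 ∧
      ∀ r : ℝ, 0 < r →
        ∀ t₁ t₂ t₃ : ℝ, t₁ ≤ t₂ → t₂ ≤ t₃ →
          ‖helix r μ t₁ - helix r μ t₂‖ ≤ ‖helix r μ t₁ - helix r μ t₃‖ := by
  have hμ : 1 / (1 + π) ≤ (0.499 : ℝ) ^ 2 := by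
    rw [div_le_iff₀ (by positivity)]
    nlinarith [pi_gt_d2]
  exact ⟨0.499, by norm_num, by norm_num, fun r _ _ _ _ ↦ norm_helix_sub_le hμ r⟩
end

section
/- Let μ ∈ (0,1/2), r > 0, λ = 1/√5, and let γ : ℝ → ℝ³ be the helix γ(t) = (r cos t, r sin t, μ r t), with derivative γ'(t) = (−r sin t, r cos t, μ r). Then for every τ ∈ ℝ and every z ∈ ℝ one has ⟨γ'(τ), (0,0,z) − γ(τ)⟩ ≤ λ‖γ'(τ)‖‖(0,0,z) − γ(τ)‖; that is, the open cone of half-aperture arccos(1/√5) with vertex γ(τ) directed by γ'(τ) does not meet the z-axis. -/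
open scoped RealInnerProductSpace
open Set

/-- The derivative `t ↦ (−r sin t, r cos t, μ r)` of the helix. -/
noncomputable def helixD (r μ t : ℝ) : EuclideanSpace ℝ (Fin 3) :=
  WithLp.toLp 2 ![-(r * Real.sin t), r * Real.cos t, μ * r]

/-- A point `(0, 0, z)` of the `z`-axis in `ℝ³`. -/
def zAxisPt (z : ℝ) : EuclideanSpace ℝ (Fin 3) := WithLp.toLp 2 ![0, 0, z]

/-! Writing `s = z - μ r τ` for the height of `(0, 0, z)` above `γ(τ)`, the inner product is
`μ r s`, while `‖γ'(τ)‖² = r² (1 + μ²)` and `‖(0,0,z) - γ(τ)‖² = r² + s²`. After squaring, the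
claim becomes `5 μ² s² ≤ (1 + μ²)(r² + s²)`, which already holds without the `r²` term
because `4 μ² ≤ 1`. -/

section HelixGeometry

variable (r μ τ z : ℝ)

lemma inner_helixD_zAxisPt_sub_helix :
    ⟪helixD r μ τ, zAxisPt z - helix r μ τ⟫ = μ * r * (z - μ * r * τ) := by
  simp only [PiLp.inner_apply, RCLike.inner_apply, conj_trivial, Fin.sum_univ_three,
    PiLp.sub_apply, helixD, helix, zAxisPt, Matrix.cons_val_zero,
    Matrix.cons_val_one, Matrix.cons_val_two, Matrix.head_cons, Matrix.tail_cons]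
  ring

lemma norm_helixD_sq : ‖helixD r μ τ‖ ^ 2 = r ^ 2 * (1 + μ ^ 2) := by
  simp only [EuclideanSpace.norm_sq_eq, Fin.sum_univ_three, helixD,
    Matrix.cons_val_zero, Matrix.cons_val_one, Matrix.cons_val_two, Matrix.head_cons,
    Matrix.tail_cons, Real.norm_eq_abs, sq_abs]
  linear_combination r ^ 2 * Real.sin_sq_add_cos_sq τ

lemma norm_zAxisPt_sub_helix_sq :
    ‖zAxisPt z - helix r μ τ‖ ^ 2 = r ^ 2 + (z - μ * r * τ) ^ 2 := by
  simp only [EuclideanSpace.norm_sq_eq, Fin.sum_univ_three, PiLp.sub_apply, helix, zAxisPt,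
    Matrix.cons_val_zero, Matrix.cons_val_one, Matrix.cons_val_two,
    Matrix.head_cons, Matrix.tail_cons, Real.norm_eq_abs, sq_abs]
  linear_combination r ^ 2 * Real.cos_sq_add_sin_sq τ

end HelixGeometry

lemma five_mul_sq_le_of_four_mul_sq_le_one {μ : ℝ} (hμ : 4 * μ ^ 2 ≤ 1) (r s : ℝ) :
    5 * (μ * r * s) ^ 2 ≤ r ^ 2 * (1 + μ ^ 2) * (r ^ 2 + s ^ 2) := by
  nlinarith [mul_nonneg (sub_nonneg.2 hμ) (mul_nonneg (sq_nonneg r) (sq_nonneg s)),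
    mul_nonneg (mul_nonneg (sq_nonneg r) (sq_nonneg r)) (add_nonneg zero_le_one (sq_nonneg μ))]

theorem helix_cone_avoids_z_axis_general (μ r : ℝ) (hμ0 : 0 < μ) (hμ : μ < 1 / 2)
    (τ z : ℝ) :
    ⟪helixD r μ τ, zAxisPt z - helix r μ τ⟫ ≤
      (1 / Real.sqrt 5) * ‖helixD r μ τ‖ * ‖zAxisPt z - helix r μ τ‖ := by
  have hμsq : 4 * μ ^ 2 ≤ 1 := by nlinarith
  have hsqrt5 : Real.sqrt 5 ^ 2 = 5 := Real.sq_sqrt (by norm_num)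
  refine (le_abs_self _).trans (abs_le_of_sq_le_sq ?_ (by positivity))
  calc ⟪helixD r μ τ, zAxisPt z - helix r μ τ⟫ ^ 2
      = (μ * r * (z - μ * r * τ)) ^ 2 := by rw [inner_helixD_zAxisPt_sub_helix]
    _ ≤ r ^ 2 * (1 + μ ^ 2) * (r ^ 2 + (z - μ * r * τ) ^ 2) / 5 := by
        linarith [five_mul_sq_le_of_four_mul_sq_le_one hμsq r (z - μ * r * τ)]
    _ = (1 / Real.sqrt 5 * ‖helixD r μ τ‖ * ‖zAxisPt z - helix r μ τ‖) ^ 2 := by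
        rw [mul_pow, mul_pow, norm_helixD_sq, norm_zAxisPt_sub_helix_sq, div_pow, hsqrt5]
        ring

/-- For `μ ∈ (0,1/2)`, `r > 0` and `λ = 1/√5`, the open cone of
half-aperture `arccos(1/√5)` with vertex `γ(τ)` directed by `γ'(τ)` (where `γ` is the
helix) does not meet the `z`-axis. -/
theorem helix_cone_avoids_z_axis (μ r : ℝ) (hμ0 : 0 < μ) (hμ : μ < 1 / 2) (hr : 0 < r)
    (τ z : ℝ) :
    ⟪helixD r μ τ, zAxisPt z - helix r μ τ⟫ ≤
      (1 / Real.sqrt 5) * ‖helixD r μ τ‖ * ‖zAxisPt z - helix r μ τ‖ :=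
  helix_cone_avoids_z_axis_general μ r hμ0 hμ τ z
end

section
/- Let λ = 1/√5, let r > 0, and let μ ∈ (0,1/2) satisfy sin τ + μ²τ ≥ 0 for all τ ≥ 0. Let γ(t) = (r cos t, r sin t, μ r t), with γ'(t) = (−r sin t, r cos t, μ r). Then for every τ ≥ 0 and every x ∈ [0, r], ⟨γ'(τ), (x,0,0) − γ(τ)⟩ ≤ λ‖γ'(τ)‖‖(x,0,0) − γ(τ)‖; that is, the open cone of half-aperture arccos(1/√5) with vertex γ(τ) directed by γ'(τ) does not meet the radial segment S = {(x,0,0) : 0 ≤ x ≤ r}. -/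
/-!
The inner product `⟪γ'(τ), (x,0,0) - γ(τ)⟫` equals `-r (x sin τ + r μ²τ)`, and writing
`x sin τ + r μ²τ = x (sin τ + μ²τ) + (r - x) μ²τ` shows it is `≤ 0`. So the segment lies in the
closed half-space behind the cone's vertex, let alone outside a cone of half-aperture `< π/2`.
-/

open scoped RealInnerProductSpace
open Set

/-- A point `(x, 0, 0)` of the radial segment `S = {(x,0,0) : 0 ≤ x ≤ r}`. -/
def segPt (x : ℝ) : EuclideanSpace ℝ (Fin 3) := WithLp.toLp 2 ![x, 0, 0]

theorem inner_helixD_segPt_sub_helix (r μ τ x : ℝ) :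
    ⟪helixD r μ τ, segPt x - helix r μ τ⟫ = -(r * (x * Real.sin τ + r * (μ ^ 2 * τ))) := by
  simp only [helixD, helix, segPt, PiLp.inner_apply, Fin.sum_univ_three, PiLp.sub_apply,
    Matrix.cons_val_zero, Matrix.cons_val_one, Matrix.cons_val_two, Matrix.head_cons,
    Matrix.tail_cons, RCLike.inner_apply, conj_trivial]
  ring

theorem mul_add_mul_nonneg_of_add_nonneg {α : Type*} [CommRing α] [PartialOrder α]
    [IsOrderedRing α] {x r s t : α} (hx0 : 0 ≤ x) (hxr : x ≤ r)
    (ht : 0 ≤ t) (hst : 0 ≤ s + t) : 0 ≤ x * s + r * t := by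
  have : x * s + r * t = x * (s + t) + (r - x) * t := by ring
  rw [this]
  exact add_nonneg (mul_nonneg hx0 hst) (mul_nonneg (sub_nonneg.2 hxr) ht)

theorem helix_cone_avoids_radial_segment_general (μ r : ℝ)
    (hμ' : ∀ τ : ℝ, 0 ≤ τ → 0 ≤ Real.sin τ + μ ^ 2 * τ)
    (τ : ℝ) (hτ : 0 ≤ τ) (x : ℝ) (hx0 : 0 ≤ x) (hxr : x ≤ r) :
    ⟪helixD r μ τ, segPt x - helix r μ τ⟫ ≤
      (1 / Real.sqrt 5) * ‖helixD r μ τ‖ * ‖segPt x - helix r μ τ‖ := by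
  have hsum : 0 ≤ x * Real.sin τ + r * (μ ^ 2 * τ) :=
    mul_add_mul_nonneg_of_add_nonneg hx0 hxr (by positivity) (hμ' τ hτ)
  calc ⟪helixD r μ τ, segPt x - helix r μ τ⟫
      = -(r * (x * Real.sin τ + r * (μ ^ 2 * τ))) := inner_helixD_segPt_sub_helix r μ τ x
    _ ≤ 0 := neg_nonpos.2 (mul_nonneg (hx0.trans hxr) hsum)
    _ ≤ _ := by positivity

/-- For `λ = 1/√5`, `r > 0` and `μ ∈ (0,1/2)` with
`sin τ + μ²τ ≥ 0` for all `τ ≥ 0`, the open cone of half-aperture `arccos(1/√5)` attached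
to the helix at `γ(τ)` (for `τ ≥ 0`) does not meet the segment `{(x,0,0) : 0 ≤ x ≤ r}`. -/
theorem helix_cone_avoids_radial_segment (μ r : ℝ) (hμ0 : 0 < μ) (hμ : μ < 1 / 2)
    (hr : 0 < r) (hμ' : ∀ τ : ℝ, 0 ≤ τ → 0 ≤ Real.sin τ + μ ^ 2 * τ)
    (τ : ℝ) (hτ : 0 ≤ τ) (x : ℝ) (hx0 : 0 ≤ x) (hxr : x ≤ r) :
    ⟪helixD r μ τ, segPt x - helix r μ τ⟫ ≤
      (1 / Real.sqrt 5) * ‖helixD r μ τ‖ * ‖segPt x - helix r μ τ‖ :=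
  helix_cone_avoids_radial_segment_general μ r hμ' τ hτ x hx0 hxr
end

section
/- Let λ = 1/√5 and μ ∈ (0,1/2). There exists M > 1, depending only on μ, such that for all R > 0, all r ∈ (0, R/2), and all a, b ∈ ℝ with MR ≤ a ≤ b, the helix γ(t) = (r cos t, r sin t, μ r t) (with γ'(t) = (−r sin t, r cos t, μ r)) satisfies: for every τ ≤ 0 and every point p = (u cos θ, u sin θ, z) with 0 ≤ u ≤ R, θ ∈ ℝ, and a ≤ z ≤ b, ⟨γ'(τ), p − γ(τ)⟩ ≤ λ‖γ'(τ)‖‖p − γ(τ)‖; that is, the open cone of half-aperture arccos(1/√5) with vertex γ(τ) directed by γ'(τ) does not meet the solid cylinder {(x,y,z) : x² + y² ≤ R², a ≤ z ≤ b}. -/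
open scoped RealInnerProductSpace
open Set

/-- A point `(u cos θ, u sin θ, z)` of the solid cylinder of radius `R`. -/
noncomputable def solidCylPt (u θ z : ℝ) : EuclideanSpace ℝ (Fin 3) :=
  WithLp.toLp 2 ![u * Real.cos θ, u * Real.sin θ, z]

open Real

theorem inner_helixD_sub_helix (r μ τ u θ z : ℝ) :
    ⟪helixD r μ τ, solidCylPt u θ z - helix r μ τ⟫ =
      r * u * sin (θ - τ) + μ * r * (z - μ * r * τ) := by
  simp only [helixD, solidCylPt, helix, PiLp.inner_apply, PiLp.sub_apply, RCLike.inner_apply,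
    ringHom_apply, Fin.sum_univ_three, Matrix.cons_val_zero, Matrix.cons_val_one, Matrix.cons_val,
    sin_sub]
  ring

theorem norm_helixD {r : ℝ} (hr : 0 ≤ r) (μ τ : ℝ) :
    ‖helixD r μ τ‖ = r * √(1 + μ ^ 2) := by
  have hsq : ∑ i, ‖helixD r μ τ i‖ ^ 2 = r ^ 2 * (1 + μ ^ 2) := by
    simp only [helixD, Fin.sum_univ_three, Real.norm_eq_abs, sq_abs, Matrix.cons_val_zero,
      Matrix.cons_val_one, Matrix.cons_val, even_two, Even.neg_pow]
    linear_combination r ^ 2 * sin_sq_add_cos_sq τ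
  rw [EuclideanSpace.norm_eq, hsq, sqrt_mul (sq_nonneg r), sqrt_sq hr]

theorem abs_sub_le_norm_solidCylPt_sub_helix (r μ τ u θ z : ℝ) :
    |z - μ * r * τ| ≤ ‖solidCylPt u θ z - helix r μ τ‖ := by
  simpa [solidCylPt, helix] using PiLp.norm_apply_le (solidCylPt u θ z - helix r μ τ) 2

theorem sqrt_five_mul_lt_sqrt_one_add_sq {μ : ℝ} (hμ : μ < 1 / 2) :
    √5 * μ < √(1 + μ ^ 2) := by
  rcases le_or_gt μ 0 with hμ0 | hμ0
  · exact (mul_nonpos_of_nonneg_of_nonpos (sqrt_nonneg 5) hμ0).trans_lt (by positivity)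
  · rw [lt_sqrt (by positivity), mul_pow, sq_sqrt (by norm_num : (0 : ℝ) ≤ 5)]
    nlinarith

/-- For `λ = 1/√5` and `μ ∈ (0,1/2)` there is `M > 1`, depending only on
`μ`, such that for all `R > 0`, `r ∈ (0, R/2)` and `MR ≤ a ≤ b`, the open cone of
half-aperture `arccos(1/√5)` attached to the helix of radius `r` at `γ(τ)`, `τ ≤ 0`,
does not meet the solid cylinder `{x² + y² ≤ R², a ≤ z ≤ b}`. -/
theorem helix_cone_avoids_remote_cylinder (μ : ℝ) (hμ0 : 0 < μ) (hμ : μ < 1 / 2) :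
    ∃ M : ℝ, 1 < M ∧
      ∀ R r a b : ℝ, 0 < R → 0 < r → r < R / 2 → M * R ≤ a → a ≤ b →
        ∀ τ : ℝ, τ ≤ 0 →
          ∀ u θ z : ℝ, 0 ≤ u → u ≤ R → a ≤ z → z ≤ b →
            ⟪helixD r μ τ, solidCylPt u θ z - helix r μ τ⟫ ≤
              (1 / Real.sqrt 5) * ‖helixD r μ τ‖ * ‖solidCylPt u θ z - helix r μ τ‖ := by
  set d := √(1 + μ ^ 2) - √5 * μ
  have hd : 0 < d := sub_pos.2 (sqrt_five_mul_lt_sqrt_one_add_sq hμ)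
  refine ⟨1 + √5 / d, lt_add_of_pos_right 1 (by positivity), ?_⟩
  intro R r a b _ hr _ hMa _ τ hτ u θ z hu huR haz _
  set w := z - μ * r * τ
  have hMu : (1 + √5 / d) * u ≤ w := by
    have : μ * r * τ ≤ 0 := mul_nonpos_of_nonneg_of_nonpos (by positivity) hτ
    calc (1 + √5 / d) * u ≤ (1 + √5 / d) * R := by gcongr
      _ ≤ w := by linarith
  have h5u : √5 * u ≤ d * w := by
    calc √5 * u ≤ (d + √5) * u := by gcongr; exact le_add_of_nonneg_left hd.le
      _ = d * ((1 + √5 / d) * u) := by field_simp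
      _ ≤ d * w := by gcongr
  rw [inner_helixD_sub_helix, norm_helixD hr.le]
  calc r * u * sin (θ - τ) + μ * r * w ≤ r * u + μ * r * w := by
        grw [mul_le_of_le_one_right (by positivity) (sin_le_one (θ - τ))]
    _ ≤ 1 / √5 * (r * √(1 + μ ^ 2)) * w := by
        rw [div_mul_eq_mul_div, div_mul_eq_mul_div, le_div_iff₀ (by positivity)]
        nlinarith [mul_le_mul_of_nonneg_left h5u hr.le]
    _ ≤ 1 / √5 * (r * √(1 + μ ^ 2)) * ‖solidCylPt u θ z - helix r μ τ‖ := by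
        gcongr; exact (le_abs_self w).trans (abs_sub_le_norm_solidCylPt_sub_helix ..)
end
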